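/- arXiv:2212.10115 — 10 statements merged into one kernel-verified Lean document; each statement's English description precedes it below -/
import Mathlib

section
/- If A : G^n → S is a symmetric n-additive map from a commutative semigroup G to a commutative group S, then applying m > n successive difference operators to the diagonalization yields zero: Δ_{y_1,...,y_m} A*(x) = 0 for all x, y_1, ..., y_m ∈ G whenever m > n. -/
/-- `A` is additive in each of its `n` variables. -/
def NAdditive {G S : Type*} [AddCommSemigroup G] [AddCommGroup S] {n : ℕ}
    (A : (Fin n → G) → S) : Prop :=
  ∀ (i : Fin n) (x : Fin n → G) (u v : G),
    A (Function.update x i (u + v)) = A (Function.update x i u) + A (Function.update x i v)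

/-- `A` is symmetric. -/
def IsSymm' {G S : Type*} {n : ℕ} (A : (Fin n → G) → S) : Prop :=
  ∀ (σ : Equiv.Perm (Fin n)) (x : Fin n → G), A (x ∘ σ) = A x

/-- The difference operator with increment `y`. -/
def delta {G S : Type*} [AddCommSemigroup G] [AddCommGroup S] (y : G) (f : G → S) : G → S :=
  fun x => f (x + y) - f x

section Aux

variable {G S : Type*} [AddCommSemigroup G] [AddCommGroup S] {n : ℕ}

/-- Partial diagonal: `x` at positions in `s`, `w` elsewhere. -/
def Fm (A : (Fin n → G) → S) (s : Finset (Fin n)) (w : Fin n → G) : G → S :=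
  fun x => A (fun i => if i ∈ s then x else w i)

lemma expand_aux (A : (Fin n → G) → S) (hadd : NAdditive A) (s : Finset (Fin n)) :
    ∀ u v w : Fin n → G,
      A (fun i => if i ∈ s then u i + v i else w i)
        = ∑ t ∈ s.powerset,
            A (fun i => if i ∈ t then u i else if i ∈ s then v i else w i) := by
  induction s using Finset.induction_on with
  | empty => intro u v w; simp
  | @insert a s ha ih =>
    intro u v w
    have h1 : (fun i => if i ∈ insert a s then u i + v i else w i)
        = Function.update (fun i => if i ∈ s then u i + v i else w i) a (u a + v a) := by
      funext i
      rcases eq_or_ne i a with rfl | h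
      · simp [Function.update_self]
      · simp [Function.update_of_ne h, Finset.mem_insert, h]
    have h2 : Function.update (fun i => if i ∈ s then u i + v i else w i) a (u a)
        = fun i => if i ∈ s then u i + v i else (Function.update w a (u a)) i := by
      funext i
      rcases eq_or_ne i a with rfl | h
      · simp [Function.update_self, ha]
      · simp [Function.update_of_ne h]
    have h3 : Function.update (fun i => if i ∈ s then u i + v i else w i) a (v a)
        = fun i => if i ∈ s then u i + v i else (Function.update w a (v a)) i := by
      funext i
      rcases eq_or_ne i a with rfl | h
      · simp [Function.update_self, ha]
      · simp [Function.update_of_ne h]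
    rw [h1, hadd a _ (u a) (v a), h2, h3, ih, ih,
      Finset.sum_powerset_insert ha]
    have e1 : ∀ t ∈ s.powerset,
        A (fun i => if i ∈ t then u i else if i ∈ s then v i else (Function.update w a (u a)) i)
          = A (fun i => if i ∈ insert a t then u i else if i ∈ insert a s then v i else w i) := by
      intro t ht
      rw [Finset.mem_powerset] at ht
      have hat : a ∉ t := fun hh => ha (ht hh)
      congr 1
      funext i
      rcases eq_or_ne i a with rfl | h
      · simp [hat, ha, Function.update_self]
      · simp [Finset.mem_insert, h, Function.update_of_ne h]
    have e2 : ∀ t ∈ s.powerset,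
        A (fun i => if i ∈ t then u i else if i ∈ s then v i else (Function.update w a (v a)) i)
          = A (fun i => if i ∈ t then u i else if i ∈ insert a s then v i else w i) := by
      intro t ht
      rw [Finset.mem_powerset] at ht
      have hat : a ∉ t := fun hh => ha (ht hh)
      congr 1
      funext i
      rcases eq_or_ne i a with rfl | h
      · simp [hat, ha, Function.update_self]
      · simp [Finset.mem_insert, h, Function.update_of_ne h]
    rw [Finset.sum_congr rfl e1, Finset.sum_congr rfl e2]
    exact add_comm _ _

lemma foldr_delta_sum {ι : Type*} (T : Finset ι) (f : ι → G → S) :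
    ∀ ys : List G,
      ys.foldr delta (fun x => ∑ t ∈ T, f t x)
        = fun x => ∑ t ∈ T, (ys.foldr delta (f t)) x := by
  intro ys
  induction ys with
  | nil => rfl
  | cons y ys ih =>
    simp only [List.foldr_cons, ih]
    funext x
    simp [delta, Finset.sum_sub_distrib]

lemma delta_Fm (A : (Fin n → G) → S) (hadd : NAdditive A) (s : Finset (Fin n))
    (w : Fin n → G) (b : G) :
    delta b (Fm A s w) = fun x => ∑ t ∈ s.powerset.erase ∅,
      Fm A (s \ t) (fun i => if i ∈ t then b else w i) x := by
  funext x
  have hcomm : (fun i => if i ∈ s then x + b else w i)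
      = fun i => if i ∈ s then b + x else w i := by
    funext i; rw [add_comm]
  have hexp := expand_aux A hadd s (fun _ => b) (fun _ => x) w
  have hsum : ∀ t ∈ s.powerset,
      A (fun i => if i ∈ t then b else if i ∈ s then x else w i)
        = Fm A (s \ t) (fun i => if i ∈ t then b else w i) x := by
    intro t ht
    rw [Finset.mem_powerset] at ht
    unfold Fm
    congr 1
    funext i
    by_cases hit : i ∈ t
    · simp [hit, Finset.mem_sdiff]
    · by_cases his : i ∈ s <;> simp [hit, his, Finset.mem_sdiff]
  have hmem : (∅ : Finset (Fin n)) ∈ s.powerset := by simp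
  show Fm A s w (x + b) - Fm A s w x = _
  have hthis : Fm A s w (x + b) = ∑ t ∈ s.powerset,
      Fm A (s \ t) (fun i => if i ∈ t then b else w i) x := by
    rw [show Fm A s w (x + b) = A (fun i => if i ∈ s then x + b else w i) from rfl,
      hcomm, hexp]
    exact Finset.sum_congr rfl hsum
  rw [hthis, ← Finset.sum_erase_add _ _ hmem]
  simp only [Finset.notMem_empty, if_false, Finset.sdiff_empty]
  abel

lemma key (A : (Fin n → G) → S) (hadd : NAdditive A) (s : Finset (Fin n)) :
    ∀ (w : Fin n → G) (ys : List G), s.card < ys.length → ∀ x,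
      (ys.foldr delta (Fm A s w)) x = 0 := by
  induction s using Finset.strongInduction with
  | _ s ih =>
    intro w ys hlen x
    rcases ys.eq_nil_or_concat with rfl | ⟨L, b, rfl⟩
    · simp at hlen
    · rw [List.concat_eq_append, List.foldr_append] at *
      simp only [List.foldr_cons, List.foldr_nil]
      rw [delta_Fm A hadd s w b, foldr_delta_sum]
      refine Finset.sum_eq_zero ?_
      intro t ht
      rw [Finset.mem_erase, Finset.mem_powerset] at ht
      have hne : t.Nonempty := Finset.nonempty_iff_ne_empty.2 ht.1
      have hss : s \ t ⊂ s := Finset.sdiff_ssubset ht.2 hne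
      have hcard : (s \ t).card < L.length := by
        have h1 : (s \ t).card < s.card := Finset.card_lt_card hss
        have h2 : s.card ≤ L.length := by
          simpa using Nat.lt_succ_iff.1 (by simpa using hlen)
        omega
      exact ih (s \ t) hss _ L hcard x

end Aux

theorem stmt1 {G S : Type*} [AddCommSemigroup G] [AddCommGroup S] {n : ℕ} (hn : 0 < n)
    (A : (Fin n → G) → S) (hadd : NAdditive A) (hsym : IsSymm' A)
    (ys : List G) (hm : n < ys.length) (x : G) :
    (ys.foldr delta (fun z => A fun _ => z)) x = 0 := by
  have hF : (fun z => A fun _ => z) = Fm A Finset.univ (fun _ => x) := by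
    funext z; simp [Fm]
  rw [hF]
  exact key A hadd Finset.univ (fun _ => x) ys (by simpa using hm) x
end

section
/- Suppose multiplication by n! is injective in the commutative group S. If A : G^n → S is a symmetric n-additive function whose diagonalization A* is identically zero, then A is identically zero. -/
/-!
Adjoin a zero to `G` and extend `A` by zero to the resulting monoid; the extension is still
additive in each variable and vanishes on the diagonal. Over a monoid, multi-additivity and
inclusion–exclusion give the polarization identity
`∑_σ A(v ∘ σ) = ∑_{T ⊆ [n]} (-1)^{n - |T|} A*(∑_{j ∈ T} v_j)`, whose right side vanishes.
By symmetry the left side is `n! • A v`, so `A v = 0` by injectivity of `n! •`.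
-/

open Finset Function

namespace Finset

variable {ι : Type*} [Fintype ι] [DecidableEq ι]

theorem sum_superset_neg_one_pow_card_compl (s : Finset ι) :
    ∑ T with s ⊆ T, (-1 : ℤ) ^ #Tᶜ = if s = univ then 1 else 0 := by
  calc ∑ T with s ⊆ T, (-1 : ℤ) ^ #Tᶜ = ∑ U ∈ sᶜ.powerset, (-1 : ℤ) ^ #U := by
        refine sum_nbij' compl compl ?_ ?_ ?_ ?_ ?_ <;> simp [subset_compl_comm]
    _ = if s = univ then 1 else 0 := by
        simp [sum_powerset_neg_one_pow_card]

theorem sum_filter_surjective_eq_sum_perm {M : Type*} [AddCommMonoid M] (g : (ι → ι) → M) :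
    ∑ r with Surjective r, g r = ∑ σ : Equiv.Perm ι, g σ := by
  symm
  refine sum_bij (fun σ _ => ⇑σ) (fun σ _ => by simp [σ.surjective])
    (fun _ _ _ _ h => DFunLike.coe_injective h) (fun r hr => ?_) (fun _ _ => rfl)
  have hr : Bijective r := Finite.surjective_iff_bijective.mp (mem_filter.mp hr).2
  exact ⟨Equiv.ofBijective r hr, mem_univ _, rfl⟩

end Finset

theorem MultilinearMap.sum_perm_eq_sum_neg_one_pow_diagonal {R ι M N : Type*} [Semiring R]
    [Fintype ι] [DecidableEq ι] [AddCommMonoid M] [AddCommGroup N] [Module R M] [Module R N]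
    (f : MultilinearMap R (fun _ : ι => M) N) (v : ι → M) :
    ∑ σ : Equiv.Perm ι, f (v ∘ σ) = ∑ T : Finset ι, (-1 : ℤ) ^ #Tᶜ • f (fun _ => ∑ j ∈ T, v j) := by
  symm
  calc ∑ T : Finset ι, (-1 : ℤ) ^ #Tᶜ • f (fun _ => ∑ j ∈ T, v j)
      = ∑ T : Finset ι, ∑ r ∈ Fintype.piFinset fun _ => T, (-1 : ℤ) ^ #Tᶜ • f (v ∘ r) := by
        simp_rw [f.map_sum_finset, smul_sum]; rfl
    _ = ∑ r : ι → ι, ∑ T with univ.image r ⊆ T, (-1 : ℤ) ^ #Tᶜ • f (v ∘ r) := by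
        refine sum_comm' fun T r => ?_
        simp [image_subset_iff]
    _ = ∑ r : ι → ι, (if univ.image r = univ then 1 else 0 : ℤ) • f (v ∘ r) := by
        simp_rw [← sum_smul, sum_superset_neg_one_pow_card_compl]
    _ = ∑ r with Surjective r, f (v ∘ r) := by
        rw [sum_filter]
        refine sum_congr rfl fun r _ => ?_
        rw [ite_smul, one_smul, zero_smul]
        congr 1
        simp [eq_univ_iff_forall, Surjective]
    _ = ∑ σ : Equiv.Perm ι, f (v ∘ σ) := sum_filter_surjective_eq_sum_perm _

section ExtendByZero

variable {G S : Type*} {n : ℕ}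

open Classical in
noncomputable def extendByZero [Zero S] (A : (Fin n → G) → S) (y : Fin n → WithZero G) : S :=
  if h : ∀ i, y i ≠ 0 then A fun i => WithZero.unzero (h i) else 0

theorem extendByZero_coe [Zero S] (A : (Fin n → G) → S) (v : Fin n → G) :
    extendByZero A (fun i => (v i : WithZero G)) = A v := by
  simp [extendByZero]

theorem extendByZero_of_eq_zero [Zero S] (A : (Fin n → G) → S) {y : Fin n → WithZero G}
    {i : Fin n} (hi : y i = 0) : extendByZero A y = 0 :=
  dif_neg fun h => h i hi

theorem extendByZero_const_eq_zero [Zero S] (hn : 0 < n) {A : (Fin n → G) → S}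
    (hdiag : ∀ x : G, A (fun _ => x) = 0) (x : WithZero G) : extendByZero A (fun _ => x) = 0 := by
  cases x with
  | zero => exact extendByZero_of_eq_zero A (i := ⟨0, hn⟩) rfl
  | coe g => exact (extendByZero_coe A fun _ => g).trans (hdiag g)

theorem exists_eq_coe_of_forall_ne_zero {y : Fin n → WithZero G} (hy : ∀ i, y i ≠ 0) :
    ∃ v : Fin n → G, y = fun i => (v i : WithZero G) := by
  choose v hv using fun i => WithZero.ne_zero_iff_exists.mp (hy i)
  exact ⟨v, funext fun i => (hv i).symm⟩

theorem NAdditive.extendByZero [AddCommSemigroup G] [AddCommGroup S] {A : (Fin n → G) → S}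
    (hA : NAdditive A) : NAdditive (extendByZero A) := by
  intro i y u w
  cases u with
  | zero => simp [extendByZero_of_eq_zero A (i := i)]
  | coe a =>
  cases w with
  | zero => simp [extendByZero_of_eq_zero A (i := i)]
  | coe b =>
  by_cases hy : ∀ j ≠ i, y j ≠ 0
  · obtain ⟨x, hx⟩ := exists_eq_coe_of_forall_ne_zero (y := update y i a) fun j => by
      rcases eq_or_ne j i with rfl | hji <;> simp_all
    have hupdate (c : G) : update y i c = fun j => (update x i c j : WithZero G) := by
      rw [← update_idem (a := i) (a : WithZero G) c y, hx]
      exact (comp_update WithZero.coe x i c).symm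
    rw [← WithZero.coe_add, hupdate, hupdate, hupdate, extendByZero_coe, extendByZero_coe,
      extendByZero_coe]
    exact hA i x a b
  · obtain ⟨j, hji, hj⟩ : ∃ j ≠ i, y j = 0 := by simpa using hy
    simp [extendByZero_of_eq_zero A (i := j), hji, hj]

end ExtendByZero

section Monoid

variable {G S : Type*} [AddCommMonoid G] [AddCommGroup S] {n : ℕ} {A : (Fin n → G) → S}

@[simps!]
def NAdditive.toMultilinearMap (hA : NAdditive A) : MultilinearMap ℕ (fun _ : Fin n => G) S :=
  MultilinearMap.mk' A (fun x i u v => hA i x u v) fun x i c u =>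
    map_nsmul (AddMonoidHom.mk' (fun u => A (update x i u)) (hA i x)) c u

theorem NAdditive.sum_perm_eq_zero (hA : NAdditive A) (hdiag : ∀ x : G, A (fun _ => x) = 0)
    (v : Fin n → G) : ∑ σ : Equiv.Perm (Fin n), A (v ∘ σ) = 0 := by
  simpa [hdiag] using hA.toMultilinearMap.sum_perm_eq_sum_neg_one_pow_diagonal v

end Monoid

theorem stmt2 {G S : Type*} [AddCommSemigroup G] [AddCommGroup S] {n : ℕ} (hn : 0 < n)
    (hinj : Function.Injective (fun s : S => n.factorial • s))
    (A : (Fin n → G) → S) (hadd : NAdditive A) (hsym : IsSymm' A)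
    (hdiag : ∀ x : G, A (fun _ => x) = 0) :
    ∀ v : Fin n → G, A v = 0 := by
  intro v
  apply hinj
  calc n.factorial • A v = ∑ σ : Equiv.Perm (Fin n), A (v ∘ σ) := by simp [hsym _ v, Fintype.card_perm]
    _ = ∑ σ : Equiv.Perm (Fin n), extendByZero A ((fun i => (v i : WithZero G)) ∘ σ) :=
        sum_congr rfl fun σ _ => (extendByZero_coe A (v ∘ σ)).symm
    _ = n.factorial • 0 := by
        rw [hadd.extendByZero.sum_perm_eq_zero (extendByZero_const_eq_zero hn hdiag), smul_zero]
end

section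
/- Let F be a field of characteristic zero and f : F → ℂ the diagonalization of a symmetric n-additive map. Then for every positive integer k, the map x ↦ f(x^k) is a generalized monomial of degree n·k, i.e. it equals the diagonalization of some symmetric (n·k)-additive map from F^{nk} to ℂ. -/
theorem stmt3 {F : Type*} [Field F] [CharZero F] {n : ℕ} (hn : 0 < n)
    (A : (Fin n → F) → ℂ) (hadd : NAdditive A) (hsym : IsSymm' A)
    (f : F → ℂ) (hf : ∀ x, f x = A fun _ => x) (k : ℕ) (hk : 0 < k) :
    ∃ B : (Fin (n * k) → F) → ℂ, NAdditive B ∧ IsSymm' B ∧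
      ∀ x : F, f (x ^ k) = B fun _ => x := by
  set e : Fin n × Fin k ≃ Fin (n * k) := finProdFinEquiv with he
  set C : (Fin (n * k) → F) → ℂ := fun y => A (fun i => ∏ j : Fin k, y (e (i, j))) with hC
  -- C is (n*k)-additive
  have hCadd : NAdditive C := by
    intro l y u v
    set i0 : Fin n := (e.symm l).1 with hi0
    set j0 : Fin k := (e.symm l).2 with hj0
    have hl : e (i0, j0) = l := by
      rw [hi0, hj0]; simp
    have hel : ∀ (i : Fin n) (j : Fin k), e (i, j) = l ↔ (i = i0 ∧ j = j0) := by
      intro i j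
      constructor
      · intro h
        have : (i, j) = (i0, j0) := e.injective (by rw [h, hl])
        exact ⟨congrArg Prod.fst this, congrArg Prod.snd this⟩
      · rintro ⟨rfl, rfl⟩; exact hl
    set P : F := ∏ j ∈ Finset.univ.erase j0, y (e (i0, j)) with hP
    have key : ∀ w : F, (fun i => ∏ j : Fin k, (Function.update y l w) (e (i, j)))
        = Function.update (fun i => ∏ j : Fin k, y (e (i, j))) i0 (w * P) := by
      intro w
      funext i
      by_cases hi : i = i0
      · subst hi
        rw [Function.update_self]
        rw [← Finset.mul_prod_erase Finset.univ _ (Finset.mem_univ j0)]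
        congr 1
        · rw [hl, Function.update_self]
        · apply Finset.prod_congr rfl
          intro j hj
          have : e (i0, j) ≠ l := fun h => (Finset.mem_erase.mp hj).1 ((hel _ _).mp h).2
          rw [Function.update_of_ne this]
      · rw [Function.update_of_ne hi]
        apply Finset.prod_congr rfl
        intro j _
        have : e (i, j) ≠ l := fun h => hi ((hel _ _).mp h).1
        rw [Function.update_of_ne this]
    simp only [hC, key]
    have : (u + v) * P = u * P + v * P := by ring
    rw [this]
    exact hadd i0 _ (u * P) (v * P)
  -- the symmetrization
  refine ⟨fun y => (((n * k).factorial : ℂ))⁻¹ *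
      ∑ σ : Equiv.Perm (Fin (n * k)), C (y ∘ σ), ?_, ?_, ?_⟩
  · -- NAdditive
    intro l y u v
    have h1 : ∀ (w : F) (σ : Equiv.Perm (Fin (n * k))),
        (Function.update y l w) ∘ ⇑σ = Function.update (y ∘ ⇑σ) (σ.symm l) w := by
      intro w σ
      exact Function.update_comp_equiv y σ l w
    simp only [h1]
    have h2 : ∀ σ : Equiv.Perm (Fin (n * k)),
        C (Function.update (y ∘ ⇑σ) (σ.symm l) (u + v))
          = C (Function.update (y ∘ ⇑σ) (σ.symm l) u)
            + C (Function.update (y ∘ ⇑σ) (σ.symm l) v) := fun σ =>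
      hCadd (σ.symm l) (y ∘ ⇑σ) u v
    rw [Finset.sum_congr rfl (fun σ _ => h2 σ), Finset.sum_add_distrib, mul_add]
  · -- IsSymm'
    intro τ y
    refine congrArg (fun s => (((n * k).factorial : ℂ))⁻¹ * s) ?_
    refine Fintype.sum_equiv (Equiv.mulLeft τ) _ _ (fun σ => ?_)
    show C ((y ∘ ⇑τ) ∘ ⇑σ) = C (y ∘ ⇑(Equiv.mulLeft τ σ))
    congr 1
  · -- diagonal value
    intro x
    have hconst : ∀ σ : Equiv.Perm (Fin (n * k)), ((fun _ => x) ∘ ⇑σ) = (fun _ => x) := by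
      intro σ; funext i; rfl
    simp only [hconst]
    have hCx : C (fun _ => x) = f (x ^ k) := by
      rw [hC, hf]
      simp [Finset.prod_const]
    rw [Finset.sum_const, hCx]
    simp only [Finset.card_univ, Fintype.card_perm, Fintype.card_fin, nsmul_eq_mul]
    rw [← mul_assoc, inv_mul_cancel₀ (by exact_mod_cast (Nat.factorial_ne_zero (n * k))), one_mul]
end

section
/- Let F ⊆ ℂ be a field, n a positive integer, α_1,...,α_n nonnegative integers, and A : F^n → ℂ a symmetric n-additive function. Then the function g : F → ℂ defined by g(x) = A(x^{α_1},...,x^{α_n}) is a generalized monomial of degree α_1 + ⋯ + α_n. -/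
theorem stmt4 (K : Subfield ℂ) {n : ℕ} (hn : 0 < n) (α : Fin n → ℕ)
    (A : (Fin n → K) → ℂ) (hadd : NAdditive A) (hsym : IsSymm' A)
    (g : K → ℂ) (hg : ∀ x : K, g x = A fun i => x ^ α i) :
    ∃ B : (Fin (∑ i, α i) → K) → ℂ, NAdditive B ∧ IsSymm' B ∧
      ∀ x : K, g x = B fun _ => x := by
  classical
  set N := ∑ i, α i with hN
  obtain ⟨e⟩ : Nonempty ((Σ i : Fin n, Fin (α i)) ≃ Fin N) :=
    ⟨Fintype.equivFinOfCardEq (by simp [hN])⟩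
  -- the "blocked product" map
  set P : (Fin N → K) → Fin n → K :=
    (fun y i => ∏ j : Fin (α i), y (e ⟨i, j⟩)) with hP
  set C : (Fin N → K) → ℂ := fun y => A (P y) with hC
  have hk_eq : ∀ k : Fin N, e ⟨(e.symm k).1, (e.symm k).2⟩ = k := by
    intro k
    rw [Sigma.eta, e.apply_symm_apply]
  -- how P interacts with update
  have hPupd : ∀ (y : Fin N → K) (k : Fin N) (w : K),
      P (Function.update y k w) =
        Function.update (P y) (e.symm k).1
          (w * ∏ j ∈ Finset.univ.erase (e.symm k).2, y (e ⟨(e.symm k).1, j⟩)) := by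
    intro y k w
    funext i
    by_cases hi : i = (e.symm k).1
    · subst hi
      rw [Function.update_self]
      show ∏ j : Fin (α (e.symm k).1), (Function.update y k w) (e ⟨(e.symm k).1, j⟩) = _
      rw [← Finset.mul_prod_erase Finset.univ _ (Finset.mem_univ (e.symm k).2)]
      congr 1
      · rw [hk_eq k, Function.update_self]
      · apply Finset.prod_congr rfl
        intro j hj
        apply Function.update_of_ne
        intro hc
        apply (Finset.mem_erase.mp hj).1
        have h2 : (⟨(e.symm k).1, j⟩ : Σ i, Fin (α i)) = ⟨(e.symm k).1, (e.symm k).2⟩ :=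
          e.injective (by rw [hk_eq]; exact hc)
        exact eq_of_heq (Sigma.mk.inj_iff.mp h2).2
    · rw [Function.update_of_ne hi]
      show ∏ j : Fin (α i), (Function.update y k w) (e ⟨i, j⟩) = ∏ j : Fin (α i), y (e ⟨i, j⟩)
      apply Finset.prod_congr rfl
      intro j _
      apply Function.update_of_ne
      intro hc
      apply hi
      have := congrArg (fun s => (e.symm s).1) hc
      simpa using this
  -- C is N-additive
  have hCadd : NAdditive C := by
    intro k y u v
    rw [hC]
    simp only [hPupd, add_mul]
    exact hadd _ _ _ _
  -- C on the diagonal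
  have hCdiag : ∀ x : K, C (fun _ => x) = A fun i => x ^ α i := by
    intro x
    show A (P fun _ => x) = _
    congr 1
    funext i
    show (∏ _j : Fin (α i), x) = x ^ α i
    simp
  -- symmetrized B
  refine ⟨fun y => (N.factorial : ℂ)⁻¹ * ∑ σ : Equiv.Perm (Fin N), C (y ∘ σ), ?_, ?_, ?_⟩
  · intro k y u v
    have h1 : ∀ (w : K) (σ : Equiv.Perm (Fin N)),
        (Function.update y k w) ∘ σ = Function.update (y ∘ σ) (σ.symm k) w := by
      intro w σ
      exact Function.update_comp_equiv y σ k w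
    simp only [h1]
    rw [← mul_add, ← Finset.sum_add_distrib]
    congr 1
    apply Finset.sum_congr rfl
    intro σ _
    exact hCadd (σ.symm k) (y ∘ σ) u v
  · intro τ y
    refine congrArg _ ?_
    refine Fintype.sum_equiv (Equiv.mulLeft τ) _ _ fun σ => ?_
    rfl
  · intro x
    rw [hg]
    have hconst : ∀ σ : Equiv.Perm (Fin N), ((fun _ : Fin N => x) ∘ σ) = fun _ => x := by
      intro σ; rfl
    simp only [hconst, Finset.sum_const, Finset.card_univ, Fintype.card_perm,
      Fintype.card_fin, nsmul_eq_mul, hCdiag]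
    rw [← mul_assoc, inv_mul_cancel₀ (by exact_mod_cast N.factorial_ne_zero), one_mul]
end

section
/- Let F ⊆ ℂ be a field, k ≥ 2, and P ∈ ℚ[x] a polynomial of degree k with derivative P'. If an additive function a : F → ℂ satisfies a(P(x)) = P'(x)·a(x) for all x ∈ F, then a is a derivation, i.e. a(xy) = x·a(y) + a(x)·y for all x, y ∈ F. -/
open Finset Polynomial

private lemma sum_ext' {D : ℕ} (c d : ℕ → ℂ)
    (h : ∀ n : ℕ, ∑ j ∈ range D, (n:ℂ)^j * c j = ∑ j ∈ range D, (n:ℂ)^j * d j) :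
    ∀ j < D, c j = d j := by
  intro j hj
  set p : Polynomial ℂ := ∑ i ∈ range D, Polynomial.C (c i - d i) * Polynomial.X ^ i with hp
  have hroot : ∀ n : ℕ, p.eval (n:ℂ) = 0 := by
    intro n
    have h2 : ∑ i ∈ range D, (c i - d i) * (n:ℂ)^i
        = (∑ i ∈ range D, (n:ℂ)^i * c i) - ∑ i ∈ range D, (n:ℂ)^i * d i := by
      rw [← Finset.sum_sub_distrib]; exact Finset.sum_congr rfl fun i _ => by ring
    simp only [hp, Polynomial.eval_finset_sum, Polynomial.eval_mul, Polynomial.eval_C,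
      Polynomial.eval_pow, Polynomial.eval_X, h2, h n, sub_self]
  have hp0 : p = 0 := by
    apply Polynomial.eq_zero_of_infinite_isRoot
    apply (Set.infinite_range_of_injective (Nat.cast_injective (R := ℂ))).mono
    rintro _ ⟨n, rfl⟩; exact hroot n
  have hco := congrArg (fun q => Polynomial.coeff q j) hp0
  simp only [hp, Polynomial.finset_sum_coeff, Polynomial.coeff_C_mul, Polynomial.coeff_X_pow,
    Polynomial.coeff_zero, mul_ite, mul_one, mul_zero, Finset.sum_ite_eq, Finset.mem_range,
    hj, if_true] at hco
  exact sub_eq_zero.mp hco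

private lemma natc1 (M j : ℕ) (h : 1 ≤ M) : (M - j) * Nat.choose M j = M * Nat.choose (M-1) j := by
  have h1 := Nat.choose_succ_right_eq M j
  have h2 := Nat.add_one_mul_choose_eq (M-1) j
  simp only [Nat.succ_eq_add_one, Nat.sub_add_cancel h] at h2
  rw [mul_comm (M-j) (Nat.choose M j), ← h1, h2]

private lemma natc2 (M i : ℕ) (h : 1 ≤ M) : (i + 1) * Nat.choose M (i+1) = M * Nat.choose (M-1) i := by
  have h2 := Nat.add_one_mul_choose_eq (M-1) i
  simp only [Nat.succ_eq_add_one, Nat.sub_add_cancel h] at h2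
  rw [mul_comm (i+1) (Nat.choose M (i+1)), h2]

private lemma cc1 (M j : ℕ) (h : 1 ≤ M) :
    ((M - j : ℕ):ℂ) * (Nat.choose M j : ℂ) = (M:ℂ) * (Nat.choose (M-1) j : ℂ) := by
  exact_mod_cast congrArg (Nat.cast : ℕ → ℂ) (natc1 M j h)

private lemma cc2 (M i : ℕ) (h : 1 ≤ M) :
    ((i+1 : ℕ):ℂ) * (Nat.choose M (i+1) : ℂ) = (M:ℂ) * (Nat.choose (M-1) i : ℂ) := by
  exact_mod_cast congrArg (Nat.cast : ℕ → ℂ) (natc2 M i h)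

private lemma expand1 (M : ℕ) (hM : 1 ≤ M) (u v w₁ w₂ : ℂ) (n : ℕ) :
    (M:ℂ) * (∑ i ∈ range M, ((n:ℂ)*u)^i * v^(M-1-i) * (Nat.choose (M-1) i : ℂ))
      * (w₁ + (n:ℂ) * w₂)
    = ∑ j ∈ range (M+1), (n:ℂ)^j *
        ((Nat.choose M j:ℂ) * (((M-j:ℕ):ℂ) * u^j * v^(M-1-j) * w₁)
          + (Nat.choose M j:ℂ) * ((j:ℂ) * u^(j-1) * v^(M-j) * w₂)) := by
  have hsplit : ∀ j ∈ range (M+1), (n:ℂ)^j *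
        ((Nat.choose M j:ℂ) * (((M-j:ℕ):ℂ) * u^j * v^(M-1-j) * w₁)
          + (Nat.choose M j:ℂ) * ((j:ℂ) * u^(j-1) * v^(M-j) * w₂))
      = (n:ℂ)^j * ((Nat.choose M j:ℂ) * (((M-j:ℕ):ℂ) * u^j * v^(M-1-j) * w₁))
        + (n:ℂ)^j * ((Nat.choose M j:ℂ) * ((j:ℂ) * u^(j-1) * v^(M-j) * w₂)) :=
    fun j _ => by ring
  rw [Finset.sum_congr rfl hsplit, Finset.sum_add_distrib]
  have e1 : ∑ j ∈ range (M+1), (n:ℂ)^j *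
        ((Nat.choose M j:ℂ) * (((M-j:ℕ):ℂ) * u^j * v^(M-1-j) * w₁))
      = (M:ℂ) * (∑ i ∈ range M, ((n:ℂ)*u)^i * v^(M-1-i) * (Nat.choose (M-1) i : ℂ)) * w₁ := by
    rw [Finset.sum_range_succ]
    simp only [Nat.sub_self, Nat.cast_zero, zero_mul, mul_zero, add_zero]
    rw [Finset.mul_sum, Finset.sum_mul]
    refine Finset.sum_congr rfl fun j hj => ?_
    have := cc1 M j hM
    calc (n:ℂ)^j * ((Nat.choose M j:ℂ) * (((M-j:ℕ):ℂ) * u^j * v^(M-1-j) * w₁))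
        = (((M-j:ℕ):ℂ) * (Nat.choose M j:ℂ)) * ((n:ℂ)^j * u^j * v^(M-1-j) * w₁) := by ring
      _ = ((M:ℂ) * (Nat.choose (M-1) j : ℂ)) * ((n:ℂ)^j * u^j * v^(M-1-j) * w₁) := by rw [this]
      _ = (M:ℂ) * (((n:ℂ)*u)^j * v^(M-1-j) * (Nat.choose (M-1) j : ℂ)) * w₁ := by
          rw [mul_pow]; ring
  have e2 : ∑ j ∈ range (M+1), (n:ℂ)^j *
        ((Nat.choose M j:ℂ) * ((j:ℂ) * u^(j-1) * v^(M-j) * w₂))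
      = (M:ℂ) * (∑ i ∈ range M, ((n:ℂ)*u)^i * v^(M-1-i) * (Nat.choose (M-1) i : ℂ))
          * ((n:ℂ) * w₂) := by
    rw [Finset.sum_range_succ']
    simp only [Nat.cast_zero, zero_mul, mul_zero, add_zero]
    rw [Finset.mul_sum, Finset.sum_mul]
    refine Finset.sum_congr rfl fun i hi => ?_
    have hc := cc2 M i hM
    have hv : M - (i+1) = M - 1 - i := by omega
    have hu : i + 1 - 1 = i := rfl
    calc (n:ℂ)^(i+1) * ((Nat.choose M (i+1):ℂ) * (((i+1:ℕ):ℂ) * u^(i+1-1) * v^(M-(i+1)) * w₂))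
        = (((i+1:ℕ):ℂ) * (Nat.choose M (i+1):ℂ)) * ((n:ℂ)^(i+1) * u^i * v^(M-1-i) * w₂) := by
          rw [hu, hv]; push_cast; ring
      _ = ((M:ℂ) * (Nat.choose (M-1) i : ℂ)) * ((n:ℂ)^(i+1) * u^i * v^(M-1-i) * w₂) := by
          rw [hc]
      _ = (M:ℂ) * (((n:ℂ)*u)^i * v^(M-1-i) * (Nat.choose (M-1) i : ℂ)) * ((n:ℂ) * w₂) := by
          rw [mul_pow, pow_succ]; ring
  rw [e1, e2]; ring

theorem stmt6 (K : Subfield ℂ) (k : ℕ) (hk : 2 ≤ k)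
    (P : Polynomial ℚ) (hdeg : P.natDegree = k)
    (a : K → ℂ) (hadd : ∀ x y : K, a (x + y) = a x + a y)
    (heq : ∀ x : K, a (Polynomial.aeval x P) =
      ((Polynomial.aeval x (Polynomial.derivative P) : K) : ℂ) * a x) :
    ∀ x y : K, a (x * y) = (x : ℂ) * a y + a x * (y : ℂ) := by
  -- basic additivity consequences
  have h0 : a 0 = 0 := by
    have h := hadd 0 0
    simp only [add_zero] at h
    linear_combination -h
  have hsum : ∀ (s : Finset ℕ) (f : ℕ → K), a (∑ i ∈ s, f i) = ∑ i ∈ s, a (f i) := by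
    intro s f
    induction s using Finset.cons_induction with
    | empty => simpa using h0
    | cons i s hi ih => rw [Finset.sum_cons, hadd, ih, Finset.sum_cons]
  have hnat : ∀ (n : ℕ) (x : K), a ((n:K) * x) = (n:ℂ) * a x := by
    intro n
    induction n with
    | zero => intro x; simp [h0]
    | succ n ih =>
        intro x
        have e : ((n+1 : ℕ):K) * x = (n:K) * x + x := by push_cast; ring
        rw [e, hadd, ih]; push_cast; ring
  have hneg : ∀ x : K, a (-x) = - a x := by
    intro x
    have h := hadd x (-x)
    simp only [add_neg_cancel, h0] at h
    linear_combination -h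
  have hint : ∀ (n : ℤ) (x : K), a ((n:K) * x) = (n:ℂ) * a x := by
    intro n x
    rcases n with m | m
    · simpa using hnat m x
    · have e : ((Int.negSucc m : ℤ):K) * x = -(((m+1:ℕ):K) * x) := by
        push_cast [Int.negSucc_eq]; ring
      rw [e, hneg, hnat]
      push_cast [Int.negSucc_eq]; ring
  have hrat : ∀ (q : ℚ) (x : K), a ((q:K) * x) = (q:ℂ) * a x := by
    intro q x
    have hdK : ((q.den:ℕ):K) ≠ 0 := by
      exact_mod_cast Nat.cast_ne_zero.mpr q.den_nz
    have key : ((q.den:ℕ):K) * ((q:K) * x) = ((q.num:ℤ):K) * x := by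
      have e : ((q.den:ℕ):K) * (q:K) = ((q.num:ℤ):K) := by
        rw [Rat.cast_def]
        field_simp
      rw [← mul_assoc, e]
    have h1 : a (((q.den:ℕ):K) * ((q:K) * x)) = ((q.den:ℕ):ℂ) * a ((q:K)*x) := hnat q.den _
    have h2 : a (((q.num:ℤ):K) * x) = ((q.num:ℤ):ℂ) * a x := hint q.num x
    rw [key, h2] at h1
    have hdC : ((q.den:ℕ):ℂ) ≠ 0 := Nat.cast_ne_zero.mpr q.den_nz
    have hqc : ((q.den:ℕ):ℂ) * (q:ℂ) = ((q.num:ℤ):ℂ) := by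
      rw [Rat.cast_def]; field_simp
    have h3 : ((q.den:ℕ):ℂ) * a ((q:K)*x) = ((q.den:ℕ):ℂ) * ((q:ℂ) * a x) := by
      rw [← h1, ← mul_assoc, hqc]
    exact mul_left_cancel₀ hdC h3
  -- polynomial facts
  have hPne : P ≠ 0 := fun hP => by rw [hP, Polynomial.natDegree_zero] at hdeg; omega
  have hck : (P.coeff k : ℂ) ≠ 0 := by
    have h := Polynomial.leadingCoeff_ne_zero.mpr hPne
    rw [Polynomial.leadingCoeff, hdeg] at h
    exact Rat.cast_ne_zero.mpr h
  have hdlt : (Polynomial.derivative P).natDegree < k := by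
    have h := Polynomial.natDegree_derivative_lt (by rw [hdeg]; omega : P.natDegree ≠ 0)
    rw [hdeg] at h
    exact h
  -- Stage 1 : monomial relation
  have hmono : ∀ y : K, a (y^k) = (k:ℂ) * (y:ℂ)^(k-1) * a y := by
    intro y
    have key : ∀ n : ℕ,
        ∑ j ∈ range (k+1), (n:ℂ)^j * ((P.coeff j : ℂ) * a (y^j))
          = ∑ j ∈ range (k+1), (n:ℂ)^j * ((P.coeff j : ℂ) * (j:ℂ) * (y:ℂ)^(j-1) * a y) := by
      intro n
      have eL : a (Polynomial.aeval ((n:K)*y) P)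
          = ∑ j ∈ range (k+1), (n:ℂ)^j * ((P.coeff j : ℂ) * a (y^j)) := by
        rw [Polynomial.aeval_eq_sum_range' (by omega : P.natDegree < k+1), hsum]
        refine Finset.sum_congr rfl fun j hj => ?_
        have e1 : P.coeff j • ((n:K)*y)^j = ((P.coeff j : ℚ):K) * (((n^j:ℕ):K) * y^j) := by
          rw [Algebra.smul_def, eq_ratCast]
          push_cast
          ring
        rw [e1, hrat, hnat]
        push_cast
        ring
      have e2 : (Polynomial.aeval ((n:K)*y) (Polynomial.derivative P) : K)
          = ∑ i ∈ range k, (((Polynomial.derivative P).coeff i : ℚ):K) * ((n:K)*y)^i := by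
        rw [Polynomial.aeval_eq_sum_range' hdlt]
        exact Finset.sum_congr rfl fun i _ => by rw [Algebra.smul_def, eq_ratCast]
      have eD : ((Polynomial.aeval ((n:K)*y) (Polynomial.derivative P) : K) : ℂ)
          = ∑ i ∈ range k, ((Polynomial.derivative P).coeff i : ℂ) * ((n:ℂ)*(y:ℂ))^i := by
        rw [e2]
        push_cast
        rfl
      have eR : ((Polynomial.aeval ((n:K)*y) (Polynomial.derivative P) : K) : ℂ) * a ((n:K)*y)
          = ∑ j ∈ range (k+1), (n:ℂ)^j * ((P.coeff j : ℂ) * (j:ℂ) * (y:ℂ)^(j-1) * a y) := by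
        rw [eD, hnat]
        rw [Finset.sum_range_succ'
          (fun j => (n:ℂ)^j * ((P.coeff j : ℂ) * (j:ℂ) * (y:ℂ)^(j-1) * a y))]
        simp only [Nat.cast_zero, mul_zero, zero_mul, add_zero, pow_zero]
        rw [Finset.sum_mul]
        refine Finset.sum_congr rfl fun i hi => ?_
        rw [Polynomial.coeff_derivative]
        simp only [Nat.add_sub_cancel]
        push_cast
        ring
      rw [← eL, heq, eR]
    have hext := sum_ext' (fun j => (P.coeff j : ℂ) * a (y^j))
      (fun j => (P.coeff j : ℂ) * (j:ℂ) * (y:ℂ)^(j-1) * a y) key k (by omega)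
    have h2 : (P.coeff k : ℂ) * a (y^k) = (P.coeff k:ℂ) * ((k:ℂ) * (y:ℂ)^(k-1) * a y) := by
      linear_combination hext
    exact mul_left_cancel₀ hck h2
  -- Stage 2
  have hk1 : 1 ≤ k := by omega
  have hkC : ((k:ℕ):ℂ) ≠ 0 := Nat.cast_ne_zero.mpr (by omega)
  have hN : ∀ x z : K, a (z^(k-1) * x)
      = (z:ℂ)^(k-1) * a x + ((k-1:ℕ):ℂ) * (z:ℂ)^(k-2) * (x:ℂ) * a z := by
    intro x z
    have key : ∀ n : ℕ,
        ∑ j ∈ range (k+1), (n:ℂ)^j * ((Nat.choose k j : ℂ) * a (z^j * x^(k-j)))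
          = ∑ j ∈ range (k+1), (n:ℂ)^j *
              ((Nat.choose k j:ℂ) * (((k-j:ℕ):ℂ) * (z:ℂ)^j * (x:ℂ)^(k-1-j) * a x)
                + (Nat.choose k j:ℂ) * ((j:ℂ) * (z:ℂ)^(j-1) * (x:ℂ)^(k-j) * a z)) := by
      intro n
      have eL : a (((n:K)*z + x)^k)
          = ∑ j ∈ range (k+1), (n:ℂ)^j * ((Nat.choose k j : ℂ) * a (z^j * x^(k-j))) := by
        rw [add_pow, hsum]
        refine Finset.sum_congr rfl fun j hj => ?_
        have e1 : ((n:K)*z)^j * x^(k-j) * (Nat.choose k j : K)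
            = (((Nat.choose k j * n^j : ℕ)):K) * (z^j * x^(k-j)) := by push_cast; ring
        rw [e1, hnat]
        push_cast
        ring
      have eC : ((((n:K)*z + x : K)):ℂ) = (n:ℂ)*(z:ℂ) + (x:ℂ) := by push_cast; ring
      have ePow : (((n:ℂ)*(z:ℂ) + (x:ℂ)))^(k-1)
          = ∑ i ∈ range k, ((n:ℂ)*(z:ℂ))^i * (x:ℂ)^(k-1-i) * (Nat.choose (k-1) i : ℂ) := by
        rw [add_pow, (by omega : k - 1 + 1 = k)]
      have eA : a ((n:K)*z + x) = a x + (n:ℂ) * a z := by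
        rw [hadd, hnat]; ring
      calc ∑ j ∈ range (k+1), (n:ℂ)^j * ((Nat.choose k j : ℂ) * a (z^j * x^(k-j)))
          = a (((n:K)*z + x)^k) := eL.symm
        _ = (k:ℂ) * ((((n:K)*z + x : K)):ℂ)^(k-1) * a ((n:K)*z + x) := hmono _
        _ = (k:ℂ) * (∑ i ∈ range k, ((n:ℂ)*(z:ℂ))^i * (x:ℂ)^(k-1-i) * (Nat.choose (k-1) i : ℂ))
              * (a x + (n:ℂ) * a z) := by rw [eC, ePow, eA]
        _ = _ := expand1 k hk1 (z:ℂ) (x:ℂ) (a x) (a z) n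
    have hext := sum_ext' (fun j => (Nat.choose k j : ℂ) * a (z^j * x^(k-j)))
      (fun j => (Nat.choose k j:ℂ) * (((k-j:ℕ):ℂ) * (z:ℂ)^j * (x:ℂ)^(k-1-j) * a x)
        + (Nat.choose k j:ℂ) * ((j:ℂ) * (z:ℂ)^(j-1) * (x:ℂ)^(k-j) * a z)) key (k-1) (by omega)
    have hch : Nat.choose k (k-1) = k := by
      rw [Nat.choose_symm (by omega : 1 ≤ k), Nat.choose_one_right]
    rw [hch, (by omega : k - (k-1) = 1), (by omega : k - 1 - (k-1) = 0),
      (by omega : k - 1 - 1 = k - 2), pow_one, pow_zero] at hext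
    have h2 : (k:ℂ) * a (z^(k-1) * x)
        = (k:ℂ) * ((z:ℂ)^(k-1) * a x + ((k-1:ℕ):ℂ) * (z:ℂ)^(k-2) * (x:ℂ) * a z) := by
      push_cast at hext ⊢
      linear_combination hext
    exact mul_left_cancel₀ hkC h2
  -- Stage 3
  have hm1 : 1 ≤ k - 1 := by omega
  have hD : ∀ x z : K, a (z * x)
      = (z:ℂ) * a x + (x:ℂ) * a z + ((k-2:ℕ):ℂ) * (x:ℂ) * (z:ℂ) * a 1 := by
    intro x z
    have key : ∀ n : ℕ,
        ∑ j ∈ range ((k-1)+1), (n:ℂ)^j * ((Nat.choose (k-1) j : ℂ) * a (z^(k-1-j) * x))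
          = ∑ j ∈ range ((k-1)+1), (n:ℂ)^j *
              ((Nat.choose (k-1) j:ℂ) * (z:ℂ)^(k-1-j) * a x
                + ((Nat.choose (k-1) j:ℂ) * (((k-1-j:ℕ):ℂ) * (1:ℂ)^j * (z:ℂ)^(k-1-1-j) * ((x:ℂ) * a z))
                  + (Nat.choose (k-1) j:ℂ) * ((j:ℂ) * (1:ℂ)^(j-1) * (z:ℂ)^(k-1-j) * ((x:ℂ) * a 1)))) := by
      intro n
      have eL : a ((((n:K) + z))^(k-1) * x)
          = ∑ j ∈ range ((k-1)+1), (n:ℂ)^j * ((Nat.choose (k-1) j : ℂ) * a (z^(k-1-j) * x)) := by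
        rw [add_pow, Finset.sum_mul, hsum]
        refine Finset.sum_congr rfl fun j hj => ?_
        have e1 : (n:K)^j * z^(k-1-j) * (Nat.choose (k-1) j : K) * x
            = (((Nat.choose (k-1) j * n^j : ℕ)):K) * (z^(k-1-j) * x) := by push_cast; ring
        rw [e1, hnat]
        push_cast
        ring
      have eC : ((((n:K) + z : K)):ℂ) = (n:ℂ) + (z:ℂ) := by push_cast; ring
      have eA : a ((n:K) + z) = a z + (n:ℂ) * a 1 := by
        have e5 : ((n:K) + z) = z + (n:K) * 1 := by ring
        rw [e5, hadd, hnat]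
      have eR1 : ((n:ℂ)+(z:ℂ))^(k-1) * a x
          = ∑ j ∈ range ((k-1)+1), (n:ℂ)^j * ((Nat.choose (k-1) j:ℂ) * (z:ℂ)^(k-1-j) * a x) := by
        rw [add_pow, Finset.sum_mul]
        exact Finset.sum_congr rfl fun j _ => by ring
      have eR2 : ((k-1:ℕ):ℂ) * ((n:ℂ)+(z:ℂ))^(k-2) * (x:ℂ) * (a z + (n:ℂ) * a 1)
          = ∑ j ∈ range ((k-1)+1), (n:ℂ)^j *
              ((Nat.choose (k-1) j:ℂ) * (((k-1-j:ℕ):ℂ) * (1:ℂ)^j * (z:ℂ)^(k-1-1-j) * ((x:ℂ) * a z))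
                + (Nat.choose (k-1) j:ℂ) * ((j:ℂ) * (1:ℂ)^(j-1) * (z:ℂ)^(k-1-j) * ((x:ℂ) * a 1))) := by
        have e6 : ((n:ℂ)+(z:ℂ))^(k-2)
            = ∑ i ∈ range (k-1), ((n:ℂ)*(1:ℂ))^i * (z:ℂ)^(k-1-1-i) * (Nat.choose (k-1-1) i : ℂ) := by
          rw [(by omega : k-2 = k-1-1), add_pow, (by omega : k-1-1+1 = k-1)]
          exact Finset.sum_congr rfl fun i _ => by rw [mul_one]
        rw [e6, ← expand1 (k-1) hm1 (1:ℂ) (z:ℂ) ((x:ℂ) * a z) ((x:ℂ) * a 1) n]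
        ring
      calc ∑ j ∈ range ((k-1)+1), (n:ℂ)^j * ((Nat.choose (k-1) j : ℂ) * a (z^(k-1-j) * x))
          = a ((((n:K) + z))^(k-1) * x) := eL.symm
        _ = ((((n:K) + z : K)):ℂ)^(k-1) * a x
              + ((k-1:ℕ):ℂ) * ((((n:K) + z : K)):ℂ)^(k-2) * (x:ℂ) * a ((n:K) + z) := hN x _
        _ = ((n:ℂ)+(z:ℂ))^(k-1) * a x
              + ((k-1:ℕ):ℂ) * ((n:ℂ)+(z:ℂ))^(k-2) * (x:ℂ) * (a z + (n:ℂ) * a 1) := by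
            rw [eC, eA]
        _ = (∑ j ∈ range ((k-1)+1), (n:ℂ)^j * ((Nat.choose (k-1) j:ℂ) * (z:ℂ)^(k-1-j) * a x))
              + ∑ j ∈ range ((k-1)+1), (n:ℂ)^j *
                ((Nat.choose (k-1) j:ℂ) * (((k-1-j:ℕ):ℂ) * (1:ℂ)^j * (z:ℂ)^(k-1-1-j) * ((x:ℂ) * a z))
                  + (Nat.choose (k-1) j:ℂ) * ((j:ℂ) * (1:ℂ)^(j-1) * (z:ℂ)^(k-1-j) * ((x:ℂ) * a 1))) := by
            rw [eR1, eR2]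
        _ = _ := by
            rw [← Finset.sum_add_distrib]
            exact Finset.sum_congr rfl fun j _ => by ring
    have hext := sum_ext' (fun j => (Nat.choose (k-1) j : ℂ) * a (z^(k-1-j) * x))
      (fun j => (Nat.choose (k-1) j:ℂ) * (z:ℂ)^(k-1-j) * a x
        + ((Nat.choose (k-1) j:ℂ) * (((k-1-j:ℕ):ℂ) * (1:ℂ)^j * (z:ℂ)^(k-1-1-j) * ((x:ℂ) * a z))
          + (Nat.choose (k-1) j:ℂ) * ((j:ℂ) * (1:ℂ)^(j-1) * (z:ℂ)^(k-1-j) * ((x:ℂ) * a 1))))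
      key (k-2) (by omega)
    have hch2 : Nat.choose (k-1) (k-2) = k - 1 := by
      rw [(by omega : k-2 = k-1-1), Nat.choose_symm (by omega : 1 ≤ k-1), Nat.choose_one_right]
    rw [hch2, (by omega : k - 1 - (k-2) = 1), (by omega : k - 1 - 1 - (k-2) = 0),
      pow_one, pow_zero, one_pow, one_pow] at hext
    have hm1C : ((k-1:ℕ):ℂ) ≠ 0 := Nat.cast_ne_zero.mpr (by omega)
    have h2 : ((k-1:ℕ):ℂ) * a (z * x)
        = ((k-1:ℕ):ℂ) * ((z:ℂ) * a x + (x:ℂ) * a z + ((k-2:ℕ):ℂ) * (x:ℂ) * (z:ℂ) * a 1) := by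
      push_cast at hext ⊢
      linear_combination hext
    exact mul_left_cancel₀ hm1C h2
  -- conclusion
  have ha1 : a 1 = 0 := by
    have h := hD 1 1
    simp only [mul_one, one_mul, OneMemClass.coe_one] at h
    have h9 : (((k-2:ℕ):ℂ) + 1) * a 1 = 0 := by linear_combination -h
    have h10 : (((k-2:ℕ):ℂ) + 1) ≠ 0 := by
      have e : ((k-2:ℕ):ℂ) + 1 = ((k-1:ℕ):ℂ) := by
        exact_mod_cast congrArg (Nat.cast : ℕ → ℂ) (by omega : (k-2) + 1 = k-1)
      rw [e]
      exact Nat.cast_ne_zero.mpr (by omega)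
    exact (mul_eq_zero.mp h9).resolve_left h10
  intro x y
  have h := hD y x
  rw [ha1] at h
  rw [h]
  ring
end

section
/- Let F ⊆ ℂ be a field and a : F → ℂ additive. If a(x^k) = a(x)^k holds for all x ∈ F for some fixed integer k ≥ 2, then there exists a field homomorphism φ : F → ℂ such that a(x) = a(1)·φ(x) for all x ∈ F. -/
open Finset Polynomial

lemma coeff_eq_of_nat_eval (m : ℕ) (c d : ℕ → ℂ)
    (h : ∀ n : ℕ, ∑ i ∈ Finset.range (m+1), c i * (n:ℂ)^i
       = ∑ i ∈ Finset.range (m+1), d i * (n:ℂ)^i) :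
    ∀ i ∈ Finset.range (m+1), c i = d i := by
  have hpq : (∑ i ∈ Finset.range (m+1), Polynomial.monomial i (c i))
      = ∑ i ∈ Finset.range (m+1), Polynomial.monomial i (d i) := by
    apply Polynomial.eq_of_infinite_eval_eq
    refine Set.Infinite.mono ?_
      (Set.infinite_range_of_injective (Nat.cast_injective (R := ℂ)))
    rintro x ⟨n, rfl⟩
    simpa [Polynomial.eval_finset_sum, Polynomial.eval_monomial] using h n
  intro i hi
  have := congrArg (Polynomial.coeff · i) hpq
  simpa [Polynomial.finset_sum_coeff, Polynomial.coeff_monomial,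
    Finset.sum_ite_eq' (Finset.range (m+1)) i, Finset.mem_range.mp hi] using this

lemma polar {R : Type*} [CommRing R] (A : R →+ ℂ) (x z w : R) (α β γ : ℂ)
    (m : ℕ) (hm : 1 ≤ m)
    (h : ∀ n : ℕ, A ((x + n • z) ^ m * w) = (α + n * β) ^ m * γ) :
    A (x ^ (m-1) * z * w) = α ^ (m-1) * β * γ := by
  have hL : ∀ n : ℕ, A ((x + n • z) ^ m * w)
      = ∑ i ∈ Finset.range (m+1),
          (A (x ^ i * z ^ (m-i) * w) * (m.choose i)) * (n:ℂ) ^ (m-i) := by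
    intro n
    rw [add_pow, Finset.sum_mul, map_sum]
    refine Finset.sum_congr rfl fun i hi => ?_
    have e : x ^ i * (n • z) ^ (m - i) * (m.choose i : R) * w
        = (n ^ (m - i) * m.choose i) • (x ^ i * z ^ (m - i) * w) := by
      simp only [_root_.smul_pow, nsmul_eq_mul, Nat.cast_mul, Nat.cast_pow]
      ring
    rw [e, map_nsmul, nsmul_eq_mul]
    push_cast
    ring
  have hR : ∀ n : ℕ, (α + n * β) ^ m * γ
      = ∑ i ∈ Finset.range (m+1),
          (α ^ i * β ^ (m-i) * γ * (m.choose i)) * (n:ℂ) ^ (m-i) := by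
    intro n
    rw [add_pow, Finset.sum_mul]
    refine Finset.sum_congr rfl fun i hi => ?_
    push_cast
    ring
  have h' : ∀ n : ℕ,
      ∑ j ∈ Finset.range (m+1),
        (A (x ^ (m-j) * z ^ (m-(m-j)) * w) * (m.choose (m-j))) * (n:ℂ) ^ j
      = ∑ j ∈ Finset.range (m+1),
        (α ^ (m-j) * β ^ (m-(m-j)) * γ * (m.choose (m-j))) * (n:ℂ) ^ j := by
    intro n
    have l := (hL n).symm.trans ((h n).trans (hR n))
    have rl :
        ∑ j ∈ Finset.range (m+1),
          (A (x ^ (m-j) * z ^ (m-(m-j)) * w) * (m.choose (m-j))) * (n:ℂ) ^ j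
        = ∑ i ∈ Finset.range (m+1),
          (A (x ^ i * z ^ (m-i) * w) * (m.choose i)) * (n:ℂ) ^ (m-i) := by
      rw [← Finset.sum_range_reflect]
      refine Finset.sum_congr rfl fun j hj => ?_
      have hjm : j ≤ m := Nat.lt_succ_iff.mp (Finset.mem_range.mp hj)
      have h1 : m + 1 - 1 - j = m - j := by omega
      have h2 : m - (m - j) = j := by omega
      rw [h1, h2]
    have rr :
        ∑ j ∈ Finset.range (m+1),
          (α ^ (m-j) * β ^ (m-(m-j)) * γ * (m.choose (m-j))) * (n:ℂ) ^ j
        = ∑ i ∈ Finset.range (m+1),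
          (α ^ i * β ^ (m-i) * γ * (m.choose i)) * (n:ℂ) ^ (m-i) := by
      rw [← Finset.sum_range_reflect]
      refine Finset.sum_congr rfl fun j hj => ?_
      have hjm : j ≤ m := Nat.lt_succ_iff.mp (Finset.mem_range.mp hj)
      have h1 : m + 1 - 1 - j = m - j := by omega
      have h2 : m - (m - j) = j := by omega
      rw [h1, h2]
    rw [rl, rr]; exact l
  have key := coeff_eq_of_nat_eval m _ _ h' 1 (by
    simp [Finset.mem_range]; omega)
  have h2 : m - (m - 1) = 1 := by omega
  have hch : (m.choose (m-1) : ℂ) = m := by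
    rw [Nat.choose_symm hm, Nat.choose_one_right]
  rw [h2] at key
  have hm0 : (m : ℂ) ≠ 0 := Nat.cast_ne_zero.mpr (by omega)
  rw [hch] at key
  have := mul_right_cancel₀ hm0 key
  simpa [pow_one] using this

theorem stmt7 (K : Subfield ℂ) (k : ℕ) (hk : 2 ≤ k)
    (a : K → ℂ) (hadd : ∀ x y : K, a (x + y) = a x + a y)
    (heq : ∀ x : K, a (x ^ k) = a x ^ k) :
    ∃ φ : K →+* ℂ, ∀ x : K, a x = a 1 * φ x := by
  set A : K →+ ℂ := AddMonoidHom.mk' a hadd with hA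
  have hAa : ∀ t : K, A t = a t := fun t => rfl
  have hlin : ∀ (n : ℕ) (x z : K), a (x + n • z) = a x + n * a z := by
    intro n x z
    rw [hadd, ← hAa (n • z), map_nsmul, hAa, nsmul_eq_mul]
  have S : ∀ x z : K, a (x ^ (k-1) * z) = a x ^ (k-1) * a z := by
    intro x z
    have h := polar A x z 1 (a x) (a z) 1 k (by omega) (fun n => by
      rw [mul_one, mul_one, hAa, heq, hlin])
    rw [hAa, mul_one, mul_one] at h
    exact h
  have T : ∀ z y : K, a (z * y) = a 1 ^ (k-2) * a z * a y := by
    intro z y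
    have h := polar A 1 z y (a 1) (a z) (a y) (k-1) (by omega) (fun n => by
      rw [hAa, S, hlin])
    rw [hAa] at h
    have e : k - 1 - 1 = k - 2 := by omega
    rw [e] at h
    rwa [one_pow, one_mul] at h
  have h1k : ∀ z : K, a z = a 1 ^ (k-1) * a z := by
    intro z
    have := S 1 z
    rwa [one_pow, one_mul] at this
  by_cases hz : ∀ z : K, a z = 0
  · exact ⟨K.subtype, fun x => by simp [hz]⟩
  · push_neg at hz
    obtain ⟨z0, hz0⟩ := hz
    have hc1 : a 1 ^ (k-1) = 1 := by
      have h := h1k z0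
      have h2 : (a 1 ^ (k-1) - 1) * a z0 = 0 := by linear_combination -h
      rcases mul_eq_zero.mp h2 with h3 | h3
      · exact sub_eq_zero.mp h3
      · exact absurd h3 hz0
    have hc0 : a 1 ≠ 0 := by
      intro h0
      rw [h0, zero_pow (by omega : k - 1 ≠ 0)] at hc1
      exact zero_ne_one hc1
    have hck2 : a 1 ^ (k-2) = (a 1)⁻¹ := by
      refine eq_inv_of_mul_eq_one_left ?_
      rw [← pow_succ]
      have e : k - 2 + 1 = k - 1 := by omega
      rw [e, hc1]
    refine ⟨RingHom.mk' ⟨⟨fun x => (a 1)⁻¹ * a x, ?_⟩, ?_⟩ ?_, ?_⟩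
    · exact inv_mul_cancel₀ hc0
    · intro x y
      simp only
      rw [T x y, hck2]
      field_simp
    · intro x y
      show (a 1)⁻¹ * a (x + y) = (a 1)⁻¹ * a x + (a 1)⁻¹ * a y
      rw [hadd]; ring
    · intro x
      show a x = a 1 * ((a 1)⁻¹ * a x)
      rw [← mul_assoc, mul_inv_cancel₀ hc0, one_mul]
end

section
/- Let F ⊆ ℂ be a field and a : F → ℂ additive. If a(x^k) = k·x^{k−1}·a(x) holds for all x ∈ F for some fixed integer k ≥ 2, then a is a derivation: a(xy) = x·a(y) + a(x)·y for all x, y ∈ F. -/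
theorem stmt8 (K : Subfield ℂ) (k : ℕ) (hk : 2 ≤ k)
    (a : K → ℂ) (hadd : ∀ x y : K, a (x + y) = a x + a y)
    (heq : ∀ x : K, a (x ^ k) = (k : ℂ) * (x : ℂ) ^ (k - 1) * a x) :
    ∀ x y : K, a (x * y) = (x : ℂ) * a y + a x * (y : ℂ) := by
  set A : K →+ ℂ := AddMonoidHom.mk' a hadd with hA
  have haA : ∀ z : K, a z = A z := fun z => rfl
  -- a 1 = 0
  have h1 : a 1 = 0 := by
    have h := heq 1
    simp at h
    have hk1 : (k : ℂ) ≠ 1 := by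
      intro hc
      have : (k : ℂ) = ((1 : ℕ) : ℂ) := by simpa using hc
      have := Nat.cast_injective (R := ℂ) this
      omega
    have : ((k : ℂ) - 1) * a 1 = 0 := by linear_combination -h
    rcases mul_eq_zero.mp this with h' | h'
    · exact absurd (by linear_combination h') hk1
    · exact h'
  have han : ∀ n : ℕ, a ((n : K)) = 0 := by
    intro n
    have : ((n : K)) = n • (1 : K) := by simp
    rw [this, haA, map_nsmul, ← haA, h1, smul_zero]
  -- key: a (x^2) = 2 x a x
  have hsq : ∀ x : K, a (x ^ 2) = 2 * (x : ℂ) * a x := by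
    intro x
    set p : Polynomial ℂ := ∑ i ∈ Finset.range (k + 1),
      Polynomial.C ((k.choose i : ℂ) * a (x ^ i)) * Polynomial.X ^ (k - i) with hp
    set q : Polynomial ℂ := ∑ i ∈ Finset.range k,
      Polynomial.C ((k : ℂ) * ((k - 1).choose i : ℂ) * (x : ℂ) ^ i * a x) *
        Polynomial.X ^ (k - 1 - i) with hq
    have heval : ∀ n : ℕ, p.eval (n : ℂ) = q.eval (n : ℂ) := by
      intro n
      have hL : p.eval (n : ℂ) = a ((x + (n : K)) ^ k) := by
        rw [add_pow]
        rw [haA, map_sum]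
        rw [hp, Polynomial.eval_finset_sum]
        simp only [Polynomial.eval_mul, Polynomial.eval_C, Polynomial.eval_pow,
          Polynomial.eval_X]
        refine Finset.sum_congr rfl fun i hi => ?_
        have hterm : x ^ i * (n : K) ^ (k - i) * (k.choose i : K)
            = (n ^ (k - i) * k.choose i) • (x ^ i) := by
          rw [nsmul_eq_mul]
          push_cast
          ring
        rw [hterm, map_nsmul, nsmul_eq_mul, ← haA]
        push_cast
        ring
      have hR : q.eval (n : ℂ) = a ((x + (n : K)) ^ k) := by
        rw [heq]
        have haxn : a (x + (n : K)) = a x := by rw [hadd, han, add_zero]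
        rw [haxn]
        have hcast : ((x + (n : K) : K) : ℂ) = (x : ℂ) + (n : ℂ) := by push_cast; ring
        rw [hcast, add_pow]
        rw [hq, Polynomial.eval_finset_sum]
        have hrange : k - 1 + 1 = k := by omega
        rw [← hrange]
        rw [Finset.mul_sum, Finset.sum_mul]
        refine Finset.sum_congr rfl fun i hi => ?_
        simp only [Polynomial.eval_mul, Polynomial.eval_C, Polynomial.eval_pow,
          Polynomial.eval_X]
        ring
      rw [hL, hR]
    have hpq : p = q := by
      apply Polynomial.eq_of_infinite_eval_eq
      apply Set.Infinite.mono (s := Set.range ((↑) : ℕ → ℂ))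
      · rintro z ⟨n, rfl⟩
        exact heval n
      · exact Set.infinite_range_of_injective Nat.cast_injective
    have hcoeff := congrArg (fun r => Polynomial.coeff r (k - 2)) hpq
    simp only [hp, hq, Polynomial.finset_sum_coeff, Polynomial.coeff_C_mul,
      Polynomial.coeff_X_pow] at hcoeff
    rw [Finset.sum_eq_single 2 (fun b hb hne => by
          rw [if_neg (by simp only [Finset.mem_range] at hb; omega), mul_zero])
        (fun h => absurd (Finset.mem_range.mpr (by omega)) h),
      Finset.sum_eq_single 1 (fun b hb hne => by
          rw [if_neg (by simp only [Finset.mem_range] at hb; omega), mul_zero])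
        (fun h => absurd (Finset.mem_range.mpr (by omega)) h),
      if_pos (by omega : k - 2 = k - 2), if_pos (by omega : k - 2 = k - 1 - 1)] at hcoeff
    have hc2 : (k.choose 2 : ℂ) ≠ 0 :=
      Nat.cast_ne_zero.mpr (Nat.choose_pos hk).ne'
    have hnat : k * ((k - 1).choose 1) = 2 * k.choose 2 := by
      rw [Nat.choose_one_right, Nat.choose_two_right]
      have hev : 2 ∣ k * (k - 1) := by
        rcases Nat.even_or_odd k with h | h
        · exact Dvd.dvd.mul_right h.two_dvd _
        · have : Even (k - 1) := by rcases h with ⟨m, hm⟩; exact ⟨m, by omega⟩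
          exact Dvd.dvd.mul_left this.two_dvd _
      omega
    have h2 : (k : ℂ) * (((k - 1).choose 1 : ℕ) : ℂ) = 2 * (k.choose 2 : ℂ) := by
      have := congrArg (fun m : ℕ => (m : ℂ)) hnat
      push_cast at this
      linear_combination this
    apply mul_left_cancel₀ hc2
    linear_combination hcoeff + (x : ℂ) * a x * h2
  intro x y
  have e : (x + y) ^ 2 = x ^ 2 + (x * y + (x * y + y ^ 2)) := by ring
  have h := hsq (x + y)
  rw [e, hadd, hadd, hadd, hsq, hsq] at h
  have hc : ((x + y : K) : ℂ) = (x : ℂ) + (y : ℂ) := by push_cast; ring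
  rw [hadd, hc] at h
  linear_combination h / 2
end

section
/- Let F ⊆ ℂ be a field, n ≥ 2, f : F → ℂ a quadratic function (trace of a symmetric bi-additive map), and a : F → ℂ additive, satisfying f(x^n) = a(x)^{2n} for all x ∈ F. Then there exist a constant α ∈ ℂ and a field homomorphism φ : F → ℂ such that a(x) = α·φ(x) and f(x) = α^{2n}·φ(x)^2 for all x ∈ F. Conversely, any such pair (a, f) satisfies the equation. -/
open Polynomial Finset

namespace Stmt9Aux

lemma cast_choose_two (m : ℕ) : ((m.choose 2 : ℕ) : ℂ) * 2 = (m : ℂ) * ((m : ℂ) - 1) := by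
  induction m with
  | zero => simp
  | succ k ih =>
    rw [Nat.choose_succ_succ]
    push_cast [Nat.choose_one_right]
    push_cast at ih
    ring_nf
    ring_nf at ih
    linear_combination ih

lemma cast_choose_three (m : ℕ) :
    ((m.choose 3 : ℕ) : ℂ) * 6 = (m : ℂ) * ((m : ℂ) - 1) * ((m : ℂ) - 2) := by
  induction m with
  | zero => simp
  | succ k ih =>
    rw [Nat.choose_succ_succ]
    push_cast
    push_cast at ih
    linear_combination ih + 3 * cast_choose_two k

lemma poly_eq_of_nat_eval (p q : ℂ[X]) (h : ∀ m : ℕ, p.eval (m : ℂ) = q.eval (m : ℂ)) :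
    p = q := by
  rw [← sub_eq_zero]
  apply Polynomial.eq_zero_of_infinite_isRoot
  apply Set.Infinite.mono (s := Set.range (fun m : ℕ => (m : ℂ)))
  · rintro _ ⟨m, rfl⟩
    simp [Polynomial.IsRoot, h m]
  · exact Set.infinite_range_of_injective Nat.cast_injective

lemma add_pow_nat {R : Type*} [CommRing R] (x y : R) (m : ℕ) (t : ℕ) (v : R) :
    (x + (m : R) * y) ^ t * v
      = ∑ k ∈ range (t + 1), (t.choose k * m ^ k) • (x ^ (t - k) * y ^ k * v) := by
  rw [add_comm x, add_pow, Finset.sum_mul]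
  refine Finset.sum_congr rfl fun k hk => ?_
  rw [nsmul_eq_mul]; push_cast; ring

variable {R : Type*} [CommRing R] (Bh : R →+ R →+ ℂ)

noncomputable def polyB (r s : ℕ) (x y z w : R) : ℂ[X] :=
  ∑ k ∈ range (r + 1), ∑ l ∈ range (s + 1),
    monomial (k + l)
      (((r.choose k * s.choose l : ℕ) : ℂ) *
        Bh (x ^ (r - k) * y ^ k * z) (x ^ (s - l) * y ^ l * w))

lemma evalB (r s : ℕ) (x y z w : R) (m : ℕ) :
    (polyB Bh r s x y z w).eval (m : ℂ)
      = Bh ((x + (m : R) * y) ^ r * z) ((x + (m : R) * y) ^ s * w) := by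
  have hR : Bh ((x + (m : R) * y) ^ r * z) ((x + (m : R) * y) ^ s * w)
      = ∑ k ∈ range (r + 1), ∑ l ∈ range (s + 1),
          (r.choose k * m ^ k) •
            ((s.choose l * m ^ l) • Bh (x ^ (r - k) * y ^ k * z) (x ^ (s - l) * y ^ l * w)) := by
    rw [add_pow_nat x y m r z, map_sum, AddMonoidHom.finset_sum_apply]
    refine Finset.sum_congr rfl fun k hk => ?_
    rw [map_nsmul, AddMonoidHom.smul_apply, add_pow_nat x y m s w, map_sum, Finset.smul_sum]
    refine Finset.sum_congr rfl fun l hl => ?_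
    rw [map_nsmul]
  rw [hR, polyB, eval_finset_sum]
  refine Finset.sum_congr rfl fun k hk => ?_
  rw [eval_finset_sum]
  refine Finset.sum_congr rfl fun l hl => ?_
  rw [eval_monomial, nsmul_eq_mul, nsmul_eq_mul]
  push_cast
  ring

lemma sum_if_eq (s d k : ℕ) (g : ℕ → ℂ) :
    (∑ l ∈ range (s + 1), if k + l = d then g l else 0)
      = if k ≤ d ∧ d - k ≤ s then g (d - k) else 0 := by
  by_cases h : k ≤ d ∧ d - k ≤ s
  · rw [if_pos h, Finset.sum_eq_single (d - k)]
    · rw [if_pos (by omega)]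
    · intro b _ hb; rw [if_neg (by omega)]
    · intro hmem; exact absurd (Finset.mem_range.mpr (by omega)) hmem
  · rw [if_neg h]
    apply Finset.sum_eq_zero
    intro l hl
    rw [Finset.mem_range] at hl
    rw [if_neg (by omega)]

lemma coeffB (r s : ℕ) (x y z w : R) (d : ℕ) :
    (polyB Bh r s x y z w).coeff d
      = ∑ k ∈ range (r + 1),
          if k ≤ d ∧ d - k ≤ s then
            ((r.choose k * s.choose (d - k) : ℕ) : ℂ) *
              Bh (x ^ (r - k) * y ^ k * z) (x ^ (s - (d - k)) * y ^ (d - k) * w)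
          else 0 := by
  rw [polyB, finset_sum_coeff]
  refine Finset.sum_congr rfl fun k hk => ?_
  rw [finset_sum_coeff]
  rw [show (∑ l ∈ range (s+1), (monomial (k+l) (((r.choose k * s.choose l : ℕ) : ℂ) *
        Bh (x ^ (r - k) * y ^ k * z) (x ^ (s - l) * y ^ l * w))).coeff d)
      = ∑ l ∈ range (s+1), if k + l = d then ((r.choose k * s.choose l : ℕ) : ℂ) *
        Bh (x ^ (r - k) * y ^ k * z) (x ^ (s - l) * y ^ l * w) else 0 from
    Finset.sum_congr rfl fun l hl => by rw [coeff_monomial]]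
  exact sum_if_eq s d k _

noncomputable def polyA (t : ℕ) (u v w : ℂ) : ℂ[X] :=
  ∑ j ∈ range (t + 1), monomial j (((t.choose j : ℕ) : ℂ) * u ^ (t - j) * v ^ j * w)

lemma evalA (t : ℕ) (u v w : ℂ) (m : ℕ) :
    (polyA t u v w).eval (m : ℂ) = (u + (m : ℂ) * v) ^ t * w := by
  rw [add_pow_nat, polyA, eval_finset_sum]
  refine Finset.sum_congr rfl fun j hj => ?_
  rw [eval_monomial, nsmul_eq_mul]
  push_cast
  ring

lemma coeffA (t : ℕ) (u v w : ℂ) (d : ℕ) (hd : d ≤ t) :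
    (polyA t u v w).coeff d = ((t.choose d : ℕ) : ℂ) * u ^ (t - d) * v ^ d * w := by
  rw [polyA, finset_sum_coeff]
  rw [show (∑ j ∈ range (t+1), (monomial j (((t.choose j : ℕ) : ℂ) * u ^ (t - j) * v ^ j * w)).coeff d)
      = ∑ j ∈ range (t+1), if j = d then ((t.choose j : ℕ) : ℂ) * u ^ (t - j) * v ^ j * w else 0 from
    Finset.sum_congr rfl fun j hj => by rw [coeff_monomial]]
  rw [Finset.sum_ite_eq' (range (t+1)) d]
  rw [if_pos (Finset.mem_range.mpr (by omega))]

lemma sum_pair (n : ℕ) (hn : 1 ≤ n) (F : ℕ → ℂ)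
    (h0 : ∀ k, k ∈ range (n + 1) → ¬(k = n - 1 ∨ k = n) → F k = 0) :
    ∑ k ∈ range (n + 1), F k = F (n - 1) + F n := by
  rw [← Finset.sum_subset (show ({n-1, n} : Finset ℕ) ⊆ range (n+1) by
        intro k hk; simp only [Finset.mem_insert, Finset.mem_singleton] at hk
        rw [Finset.mem_range]; omega)
      (fun k hk hk2 => h0 k hk (by simpa using hk2))]
  rw [Finset.sum_insert (by simp; omega), Finset.sum_singleton]

lemma sum_triple (n : ℕ) (hn : 2 ≤ n) (F : ℕ → ℂ)
    (h0 : ∀ k, k ∈ range (n + 1) → ¬(k = n - 2 ∨ k = n - 1 ∨ k = n) → F k = 0) :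
    ∑ k ∈ range (n + 1), F k = F (n - 2) + F (n - 1) + F n := by
  rw [← Finset.sum_subset (show ({n-2, n-1, n} : Finset ℕ) ⊆ range (n+1) by
        intro k hk; simp only [Finset.mem_insert, Finset.mem_singleton] at hk
        rw [Finset.mem_range]; omega)
      (fun k hk hk2 => h0 k hk (by simpa using hk2))]
  rw [Finset.sum_insert (by simp; omega), Finset.sum_insert (by simp; omega),
    Finset.sum_singleton]
  ring

lemma sum_quad (n : ℕ) (hn : 3 ≤ n) (F : ℕ → ℂ)
    (h0 : ∀ k, k ∈ range (n + 1) → ¬(k = n - 3 ∨ k = n - 2 ∨ k = n - 1 ∨ k = n) → F k = 0) :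
    ∑ k ∈ range (n + 1), F k = F (n - 3) + F (n - 2) + F (n - 1) + F n := by
  rw [← Finset.sum_subset (show ({n-3, n-2, n-1, n} : Finset ℕ) ⊆ range (n+1) by
        intro k hk; simp only [Finset.mem_insert, Finset.mem_singleton] at hk
        rw [Finset.mem_range]; omega)
      (fun k hk hk2 => h0 k hk (by simpa using hk2))]
  rw [Finset.sum_insert (by simp; omega), Finset.sum_insert (by simp; omega),
    Finset.sum_insert (by simp; omega), Finset.sum_singleton]
  ring

end Stmt9Aux

open Polynomial Finset Stmt9Aux

set_option maxHeartbeats 1600000 in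
theorem stmt9 (K : Subfield ℂ) (n : ℕ) (hn : 2 ≤ n)
    (f a : K → ℂ) (B : K → K → ℂ)
    (hB1 : ∀ x y z : K, B (x + y) z = B x z + B y z)
    (hB2 : ∀ x y z : K, B x (y + z) = B x y + B x z)
    (hBs : ∀ x y : K, B x y = B y x)
    (hf : ∀ x : K, f x = B x x)
    (ha : ∀ x y : K, a (x + y) = a x + a y) :
    (∀ x : K, f (x ^ n) = a x ^ (2 * n)) ↔
      ∃ (α : ℂ) (φ : K →+* ℂ), ∀ x : K,
        a x = α * φ x ∧ f x = α ^ (2 * n) * φ x ^ 2 := by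
  constructor
  · intro hE
    set c : ℂ := a 1 with hc
    have hnn : (n : ℂ) ≠ 0 := Nat.cast_ne_zero.mpr (by omega)
    have ha0 : a 0 = 0 := by
      have h00 := ha 0 0
      rw [add_zero] at h00
      exact (left_eq_add.mp h00)
    have haM : ∀ (m : ℕ) (y : K), a ((m : K) * y) = (m : ℂ) * a y := by
      intro m y
      have h1 : ((m : K) * y) = m • y := by rw [nsmul_eq_mul]
      rw [h1]
      show (AddMonoidHom.mk' a ha) (m • y) = (m : ℂ) * a y
      rw [map_nsmul, nsmul_eq_mul]
      rfl
    let Bh : K →+ K →+ ℂ := AddMonoidHom.mk'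
      (fun u => AddMonoidHom.mk' (B u) (hB2 u))
      (fun u v => AddMonoidHom.ext fun z => hB1 u v z)
    have hBhB : ∀ u v : K, Bh u v = B u v := fun u v => rfl
    have hBsym : ∀ u v : K, Bh u v = Bh v u := fun u v => by rw [hBhB, hBhB, hBs]
    have hE' : ∀ x : K, Bh (x ^ n) (x ^ n) = a x ^ (2 * n) := by
      intro x; rw [hBhB, ← hf, hE]
    have haAdd : ∀ (x : K) (m : ℕ), a (x + (m : K) * 1) = a x + (m : ℂ) * c := by
      intro x m; rw [ha, haM]
    -- family 1 : B((x+my)^n,(x+my)^n) = (a x + m a y)^{2n}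
    have fam1 : ∀ x y : K, polyB Bh n n x y 1 1 = polyA (2 * n) (a x) (a y) 1 := by
      intro x y
      apply poly_eq_of_nat_eval
      intro m
      rw [evalB, evalA]
      simp only [mul_one]
      rw [hE' (x + (m : K) * y), ha, haM]
    have master1 : ∀ (x y : K) (d : ℕ), d ≤ 2 * n →
        (∑ k ∈ range (n + 1),
          if k ≤ d ∧ d - k ≤ n then
            ((n.choose k * n.choose (d - k) : ℕ) : ℂ) *
              Bh (x ^ (n - k) * y ^ k * 1) (x ^ (n - (d - k)) * y ^ (d - k) * 1)
          else 0)
        = (((2 * n).choose d : ℕ) : ℂ) * a x ^ (2 * n - d) * a y ^ d := by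
      intro x y d hd
      have h := congrArg (fun p => p.coeff d) (fam1 x y)
      rw [coeffB, coeffA _ _ _ _ _ hd, mul_one] at h
      exact h
    -- L1
    have L1 : ∀ x y : K, Bh (x ^ n) (x ^ (n - 1) * y) = a x ^ (2 * n - 1) * a y := by
      intro x y
      have hm := master1 x y 1 (by omega)
      rw [← Finset.sum_subset (show range 2 ⊆ range (n + 1) by
            apply Finset.range_subset_range.mpr; omega)
          (fun k hk hk2 => by
            rw [if_neg]
            rw [Finset.mem_range] at hk hk2
            omega)] at hm
      rw [Finset.sum_range_succ, Finset.sum_range_one] at hm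
      rw [if_pos (by omega : (0:ℕ) ≤ 1 ∧ 1 - 0 ≤ n),
          if_pos (by omega : (1:ℕ) ≤ 1 ∧ 1 - 1 ≤ n)] at hm
      simp only [Nat.sub_zero, Nat.sub_self, pow_zero, pow_one, one_mul, mul_one,
        Nat.choose_zero_right, Nat.choose_one_right, Nat.choose_self] at hm
      rw [hBsym (x ^ (n-1) * y) (x ^ n)] at hm
      have h2 : (2 * (n:ℂ)) * Bh (x ^ n) (x ^ (n - 1) * y)
          = (2 * (n:ℂ)) * (a x ^ (2 * n - 1) * a y) := by
        push_cast at hm ⊢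
        linear_combination hm
      exact mul_left_cancel₀ (by simpa using hnn) h2
    -- L2
    have L2 : ∀ x : K, Bh 1 x = a x * c ^ (2 * n - 1) := by
      intro x
      have hm := master1 x 1 (2 * n - 1) (by omega)
      rw [sum_pair n (by omega)] at hm
      · rw [if_pos (by omega : n - 1 ≤ 2*n-1 ∧ (2*n-1) - (n-1) ≤ n),
            if_pos (by omega : n ≤ 2*n-1 ∧ (2*n-1) - n ≤ n)] at hm
        rw [show (2*n-1) - (n-1) = n from by omega,
            show (2*n-1) - n = n - 1 from by omega,
            show n - (n-1) = 1 from by omega] at hm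
        rw [Nat.sub_self] at hm
        rw [Nat.choose_symm (show 1 ≤ n by omega), Nat.choose_symm (show 1 ≤ 2*n by omega)] at hm
        simp only [Nat.choose_one_right, Nat.choose_self, pow_zero, pow_one, one_pow,
          one_mul, mul_one] at hm
        rw [show 2*n - (2*n-1) = 1 from by omega] at hm
        rw [hBsym x 1] at hm
        have h2 : (2 * (n:ℂ)) * Bh 1 x = (2 * (n:ℂ)) * (a x * c ^ (2*n-1)) := by
          push_cast at hm ⊢
          linear_combination hm
        exact mul_left_cancel₀ (by simpa using hnn) h2
      · intro k hk hk2
        rw [Finset.mem_range] at hk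
        rw [if_neg (by omega)]
    -- L3
    have L3 : ∀ x : K, 2 * ((n.choose 2 : ℕ) : ℂ) * Bh 1 (x ^ 2) + (n:ℂ)^2 * Bh x x
        = (((2*n).choose 2 : ℕ) : ℂ) * a x ^ 2 * c ^ (2*n-2) := by
      intro x
      have hm := master1 x 1 (2*n-2) (by omega)
      rw [sum_triple n hn] at hm
      · rw [if_pos (by omega : n - 2 ≤ 2*n-2 ∧ (2*n-2) - (n-2) ≤ n),
            if_pos (by omega : n - 1 ≤ 2*n-2 ∧ (2*n-2) - (n-1) ≤ n),
            if_pos (by omega : n ≤ 2*n-2 ∧ (2*n-2) - n ≤ n)] at hm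
        simp only [one_pow, mul_one] at hm
        rw [show (2*n-2) - (n-2) = n from by omega,
            show (2*n-2) - (n-1) = n - 1 from by omega,
            show (2*n-2) - n = n - 2 from by omega,
            show n - (n-2) = 2 from by omega,
            show n - (n-1) = 1 from by omega,
            Nat.sub_self] at hm
        rw [Nat.choose_symm (show 2 ≤ n by omega), Nat.choose_symm (show 1 ≤ n by omega),
            show 2*n - 2 = 2*n - 2 from rfl] at hm
        rw [show (2*n).choose (2*n-2) = (2*n).choose 2 from by
              rw [show 2*n-2 = 2*n - 2 from rfl]; exact Nat.choose_symm (by omega),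
            show 2*n - (2*n-2) = 2 from by omega] at hm
        simp only [Nat.choose_one_right, Nat.choose_self, pow_zero, pow_one, one_mul,
          mul_one] at hm
        rw [hBsym (x^2) 1] at hm
        push_cast at hm ⊢
        linear_combination hm
      · intro k hk hk2
        rw [Finset.mem_range] at hk
        rw [if_neg (by omega)]
    -- family 2
    have fam2 : ∀ x y : K, polyB Bh n (n-1) x 1 1 y = polyA (2*n-1) (a x) c (a y) := by
      intro x y
      apply poly_eq_of_nat_eval
      intro m
      rw [evalB, evalA]
      have hL := L1 (x + (m : K) * 1) y
      rw [haAdd] at hL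
      rw [mul_one ((x + (m : K) * 1) ^ n)]
      exact hL
    have master2 : ∀ (x y : K) (d : ℕ), d ≤ 2*n - 1 →
        (∑ k ∈ range (n + 1),
          if k ≤ d ∧ d - k ≤ n - 1 then
            ((n.choose k * (n-1).choose (d - k) : ℕ) : ℂ) *
              Bh (x ^ (n - k) * 1 ^ k * 1) (x ^ ((n-1) - (d - k)) * 1 ^ (d - k) * y)
          else 0)
        = (((2*n-1).choose d : ℕ) : ℂ) * a x ^ (2*n-1 - d) * c ^ d * a y := by
      intro x y d hd
      have h := congrArg (fun p => p.coeff d) (fam2 x y)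
      rw [coeffB, coeffA _ _ _ _ _ hd] at h
      exact h
    -- L4
    have L4 : ∀ x y : K, (n:ℂ) * Bh x y + ((n:ℂ) - 1) * Bh 1 (x*y)
        = (2*(n:ℂ) - 1) * a x * c ^ (2*n-2) * a y := by
      intro x y
      have hm := master2 x y (2*n-2) (by omega)
      rw [sum_pair n (by omega)] at hm
      · rw [if_pos (by omega : n - 1 ≤ 2*n-2 ∧ (2*n-2) - (n-1) ≤ n - 1),
            if_pos (by omega : n ≤ 2*n-2 ∧ (2*n-2) - n ≤ n - 1)] at hm
        simp only [one_pow, mul_one, one_mul] at hm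
        rw [show n - (n-1) = 1 from by omega, Nat.sub_self,
            show (2*n-2) - (n-1) = n - 1 from by omega,
            show (2*n-2) - n = n - 2 from by omega,
            show (n-1) - (n-2) = 1 from by omega] at hm
        rw [show n - 1 - (n - 1) = 0 from by omega, pow_zero, one_mul] at hm
        rw [Nat.choose_symm (show 1 ≤ n by omega)] at hm
        rw [show (n-1).choose (n-2) = n - 1 from by
              rw [show n-2 = (n-1) - 1 from by omega, Nat.choose_symm (by omega),
                Nat.choose_one_right],
            show (2*n-1).choose (2*n-2) = 2*n-1 from by
              rw [show 2*n-2 = (2*n-1) - 1 from by omega, Nat.choose_symm (by omega),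
                Nat.choose_one_right],
            show (2*n-1) - (2*n-2) = 1 from by omega] at hm
        simp only [Nat.choose_self, Nat.choose_one_right, pow_zero,
          pow_one, one_mul, mul_one] at hm
        rw [show ((n-1 : ℕ) : ℂ) = (n:ℂ) - 1 from by
              rw [Nat.cast_sub (by omega)]; simp,
            show ((2*n-1 : ℕ) : ℂ) = 2*(n:ℂ) - 1 from by
              rw [Nat.cast_sub (by omega)]; push_cast; ring] at hm
        push_cast at hm ⊢
        linear_combination hm
      · intro k hk hk2
        rw [Finset.mem_range] at hk
        rw [if_neg (by omega)]
    -- L5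
    have L5 : ∀ x y : K, ((n.choose 2 : ℕ) : ℂ) * Bh (x^2) y
        + (n:ℂ) * ((n:ℂ) - 1) * Bh x (x*y) + (((n-1).choose 2 : ℕ) : ℂ) * Bh 1 (x^2*y)
        = (((2*n-1).choose 2 : ℕ) : ℂ) * a x ^ 2 * c ^ (2*n-3) * a y := by
      intro x y
      rcases Nat.lt_or_ge n 3 with h3 | h3
      · have hn2 : n = 2 := by omega
        subst hn2
        have hm := master2 x y 1 (by norm_num)
        rw [Finset.sum_range_succ, Finset.sum_range_succ, Finset.sum_range_one] at hm
        norm_num at hm ⊢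
        linear_combination hm
      · have hm := master2 x y (2*n-3) (by omega)
        rw [sum_triple n hn] at hm
        · rw [if_pos (by omega : n - 2 ≤ 2*n-3 ∧ (2*n-3) - (n-2) ≤ n - 1),
              if_pos (by omega : n - 1 ≤ 2*n-3 ∧ (2*n-3) - (n-1) ≤ n - 1),
              if_pos (by omega : n ≤ 2*n-3 ∧ (2*n-3) - n ≤ n - 1)] at hm
          simp only [one_pow, mul_one, one_mul] at hm
          rw [show (2*n-3) - (n-2) = n - 1 from by omega,
              show (2*n-3) - (n-1) = n - 2 from by omega,
              show (2*n-3) - n = n - 3 from by omega,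
              show n - (n-2) = 2 from by omega,
              show n - (n-1) = 1 from by omega,
              show n - 1 - (n-1) = 0 from by omega,
              show n - 1 - (n-2) = 1 from by omega,
              show n - 1 - (n-3) = 2 from by omega,
              Nat.sub_self] at hm
          rw [show (n-1).choose (n-2) = n - 1 from by
                rw [show n-2 = (n-1) - 1 from by omega, Nat.choose_symm (by omega),
                  Nat.choose_one_right],
              show (n-1).choose (n-3) = (n-1).choose 2 from by
                rw [show n-3 = (n-1) - 2 from by omega]; exact Nat.choose_symm (by omega),
              show (2*n-1).choose (2*n-3) = (2*n-1).choose 2 from by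
                rw [show 2*n-3 = (2*n-1) - 2 from by omega]; exact Nat.choose_symm (by omega),
              show (2*n-1) - (2*n-3) = 2 from by omega] at hm
          rw [Nat.choose_symm (show 2 ≤ n by omega),
              Nat.choose_symm (show 1 ≤ n by omega)] at hm
          simp only [Nat.choose_self, Nat.choose_one_right, pow_zero, pow_one, one_mul,
            mul_one] at hm
          push_cast [Nat.cast_sub (show 1 ≤ n by omega)] at hm ⊢
          linear_combination hm
        · intro k hk hk2
          rw [Finset.mem_range] at hk
          rw [if_neg (by omega)]
    -- L6
    have L6 : ∀ x y : K, ((n.choose 3 : ℕ) : ℂ) * Bh (x^3) y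
        + ((n.choose 2 : ℕ) : ℂ) * ((n:ℂ) - 1) * Bh (x^2) (x*y)
        + (n:ℂ) * (((n-1).choose 2 : ℕ) : ℂ) * Bh x (x^2*y)
        + (((n-1).choose 3 : ℕ) : ℂ) * Bh 1 (x^3*y)
        = (((2*n-1).choose 3 : ℕ) : ℂ) * a x ^ 3 * c ^ (2*n-4) * a y := by
      intro x y
      rcases Nat.lt_or_ge n 3 with h3 | h3
      · have hn2 : n = 2 := by omega
        subst hn2
        have hm := master2 x y 0 (by norm_num)
        rw [Finset.sum_range_succ, Finset.sum_range_succ, Finset.sum_range_one] at hm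
        norm_num [show Nat.choose 1 3 = 0 from by decide,
          show Nat.choose 2 3 = 0 from by decide] at hm ⊢
        linear_combination hm
      rcases Nat.lt_or_ge n 4 with h4 | h4
      · have hn3 : n = 3 := by omega
        subst hn3
        have hm := master2 x y 2 (by norm_num)
        rw [Finset.sum_range_succ, Finset.sum_range_succ, Finset.sum_range_succ,
          Finset.sum_range_one] at hm
        norm_num [show Nat.choose 5 2 = 10 from by decide,
          show Nat.choose 5 3 = 10 from by decide,
          show Nat.choose 2 3 = 0 from by decide] at hm ⊢
        linear_combination hm
      · have hm := master2 x y (2*n-4) (by omega)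
        rw [sum_quad n (by omega)] at hm
        · rw [if_pos (by omega : n - 3 ≤ 2*n-4 ∧ (2*n-4) - (n-3) ≤ n - 1),
              if_pos (by omega : n - 2 ≤ 2*n-4 ∧ (2*n-4) - (n-2) ≤ n - 1),
              if_pos (by omega : n - 1 ≤ 2*n-4 ∧ (2*n-4) - (n-1) ≤ n - 1),
              if_pos (by omega : n ≤ 2*n-4 ∧ (2*n-4) - n ≤ n - 1)] at hm
          simp only [one_pow, mul_one, one_mul] at hm
          rw [show (2*n-4) - (n-3) = n - 1 from by omega,
              show (2*n-4) - (n-2) = n - 2 from by omega,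
              show (2*n-4) - (n-1) = n - 3 from by omega,
              show (2*n-4) - n = n - 4 from by omega,
              show n - (n-3) = 3 from by omega,
              show n - (n-2) = 2 from by omega,
              show n - (n-1) = 1 from by omega,
              show n - 1 - (n-1) = 0 from by omega,
              show n - 1 - (n-2) = 1 from by omega,
              show n - 1 - (n-3) = 2 from by omega,
              show n - 1 - (n-4) = 3 from by omega,
              Nat.sub_self] at hm
          rw [show (n-1).choose (n-2) = n - 1 from by
                rw [show n-2 = (n-1) - 1 from by omega, Nat.choose_symm (by omega),
                  Nat.choose_one_right],
              show (n-1).choose (n-3) = (n-1).choose 2 from by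
                rw [show n-3 = (n-1) - 2 from by omega]; exact Nat.choose_symm (by omega),
              show (n-1).choose (n-4) = (n-1).choose 3 from by
                rw [show n-4 = (n-1) - 3 from by omega]; exact Nat.choose_symm (by omega),
              show (2*n-1).choose (2*n-4) = (2*n-1).choose 3 from by
                rw [show 2*n-4 = (2*n-1) - 3 from by omega]; exact Nat.choose_symm (by omega),
              show (2*n-1) - (2*n-4) = 3 from by omega] at hm
          rw [show n.choose (n-3) = n.choose 3 from by
                rw [show n-3 = n - 3 from rfl]; exact Nat.choose_symm (by omega),
              Nat.choose_symm (show 2 ≤ n by omega),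
              Nat.choose_symm (show 1 ≤ n by omega)] at hm
          simp only [Nat.choose_self, Nat.choose_one_right, pow_zero, pow_one, one_mul,
            mul_one] at hm
          push_cast [Nat.cast_sub (show 1 ≤ n by omega)] at hm ⊢
          linear_combination hm
        · intro k hk hk2
          rw [Finset.mem_range] at hk
          rw [if_neg (by omega)]
    -- cast facts
    have hC2 : ((n.choose 2 : ℕ) : ℂ) = (n:ℂ) * ((n:ℂ) - 1) / 2 := by
      linear_combination (cast_choose_two n) / 2
    have hC3 : ((n.choose 3 : ℕ) : ℂ) = (n:ℂ) * ((n:ℂ) - 1) * ((n:ℂ) - 2) / 6 := by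
      linear_combination (cast_choose_three n) / 6
    have hcn1 : ((n - 1 : ℕ) : ℂ) = (n:ℂ) - 1 := by
      rw [Nat.cast_sub (by omega)]; simp
    have hc2n1 : ((2*n - 1 : ℕ) : ℂ) = 2*(n:ℂ) - 1 := by
      rw [Nat.cast_sub (by omega)]; push_cast; ring
    have hC2' : (((n-1).choose 2 : ℕ) : ℂ) = ((n:ℂ) - 1) * ((n:ℂ) - 2) / 2 := by
      have := cast_choose_two (n-1)
      rw [hcn1] at this
      linear_combination this / 2
    have hC3' : (((n-1).choose 3 : ℕ) : ℂ) = ((n:ℂ) - 1) * ((n:ℂ) - 2) * ((n:ℂ) - 3) / 6 := by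
      have := cast_choose_three (n-1)
      rw [hcn1] at this
      linear_combination this / 6
    have hD3 : (((2*n-1).choose 3 : ℕ) : ℂ)
        = (2*(n:ℂ) - 1) * (2*(n:ℂ) - 2) * (2*(n:ℂ) - 3) / 6 := by
      have := cast_choose_three (2*n-1)
      rw [hc2n1] at this
      linear_combination this / 6
    have hT2 : (((2*n).choose 2 : ℕ) : ℂ) = 2*(n:ℂ) * (2*(n:ℂ) - 1) / 2 := by
      have := cast_choose_two (2*n)
      push_cast at this
      linear_combination this / 2
    have hN1 : (n:ℂ) - 1 ≠ 0 := by
      intro h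
      rw [sub_eq_zero] at h
      have : ((n:ℕ) : ℂ) = ((1:ℕ) : ℂ) := by push_cast; linear_combination h
      exact absurd (Nat.cast_injective this) (by omega)
    have h2N1 : 2*(n:ℂ) - 1 ≠ 0 := by
      intro h
      rw [sub_eq_zero] at h
      have : ((2*n:ℕ) : ℂ) = ((1:ℕ) : ℂ) := by push_cast; linear_combination h
      exact absurd (Nat.cast_injective this) (by omega)
    by_cases hc0 : c = 0
    · -- degenerate case
      have hB1x : ∀ x : K, Bh 1 x = 0 := fun x => by
        rw [L2, hc0, zero_pow (show 2*n-1 ≠ 0 by omega), mul_zero]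
      have hfz : ∀ x : K, f x = 0 := by
        intro x
        have h3 := L3 x
        rw [hB1x, hc0, zero_pow (show 2*n-2 ≠ 0 by omega)] at h3
        have hxx : (n:ℂ)^2 * Bh x x = (n:ℂ)^2 * 0 := by
          rw [mul_zero]; linear_combination h3
        have := mul_left_cancel₀ (pow_ne_zero 2 hnn) hxx
        rw [hf, ← hBhB, this]
      have haz : ∀ x : K, a x = 0 := by
        intro x
        have h := hE x
        rw [hfz] at h
        exact pow_eq_zero_iff (show 2*n ≠ 0 by omega) |>.mp h.symm
      exact ⟨0, K.subtype, fun x => ⟨by rw [haz, zero_mul],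
        by rw [hfz, zero_pow (show 2*n ≠ 0 by omega), zero_mul]⟩⟩
    · -- main case
      have hq1 : c^(2*n-2) = c^(2*n-3) * c := by
        rw [← pow_succ]; congr 1; omega
      have hq2 : c^(2*n-1) = c^(2*n-3) * c^2 := by
        rw [← pow_add]; congr 1; omega
      have hg1 : c^(2*n-3) = c^(2*n-4) * c := by
        rw [← pow_succ]; congr 1; omega
      have hg2 : c^(2*n-2) = c^(2*n-4) * c^2 := by
        rw [← pow_add]; congr 1; omega
      have hg3 : c^(2*n-1) = c^(2*n-4) * c^3 := by
        rw [← pow_add]; congr 1; omega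
      -- (I)
      have hI : ∀ u v : K, (n:ℂ) * Bh u v
          = (2*(n:ℂ) - 1) * c^(2*n-2) * a u * a v - ((n:ℂ) - 1) * c^(2*n-1) * a (u*v) := by
        intro u v
        have h4 := L4 u v
        rw [L2 (u*v)] at h4
        linear_combination h4
      -- (V)
      have hii : ∀ x y : K, c^2 * a (x^2*y)
          = c * a (x^2) * a y + 2*c*(a x)*a (x*y) - 2*(a x)^2 * a y := by
        intro x y
        have hD2 : (((2*n-1).choose 2 : ℕ) : ℂ) = (2*(n:ℂ) - 1) * (2*(n:ℂ) - 2) / 2 := by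
          have := cast_choose_two (2*n-1)
          rw [hc2n1] at this
          linear_combination this / 2
        have h5 := L5 x y
        rw [L2 (x^2*y), hC2, hC2', hD2] at h5
        have i1 := hI (x^2) y
        have i2 := hI x (x*y)
        rw [show x*(x*y) = x^2*y from by ring] at i2
        rw [hq1, hq2] at i1 i2
        rw [hq2] at h5
        have key : c^(2*n-3) * ((n:ℂ) * (((n:ℂ) - 1) * (2*(n:ℂ) - 1)))
            * (c^2 * a (x^2*y) - (c * a (x^2) * a y + 2*c*(a x)*a (x*y) - 2*(a x)^2 * a y))
            = 0 := by
          linear_combination (-2*(n:ℂ))*h5 + ((n:ℂ)*((n:ℂ)-1))*i1 + (2*(n:ℂ)*((n:ℂ)-1))*i2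
        have hM : c^(2*n-3) * ((n:ℂ) * (((n:ℂ) - 1) * (2*(n:ℂ) - 1))) ≠ 0 :=
          mul_ne_zero (pow_ne_zero _ hc0) (mul_ne_zero hnn (mul_ne_zero hN1 h2N1))
        have := (mul_eq_zero.mp key).resolve_left hM
        linear_combination this
      -- a(x^2) = a(x)^2 / c
      have hiii : ∀ x : K, c * a (x^2) = (a x)^2 := by
        intro x
        have k1 := hI (x^3) x
        rw [show x^3*x = x^4 from by ring] at k1
        have k2 := hI (x^2) (x^2)
        rw [show x^2*x^2 = x^4 from by ring] at k2
        have k3 := hI x (x^3)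
        rw [show x*x^3 = x^4 from by ring] at k3
        have k4 := L2 (x^4)
        have k5 := L6 x x
        rw [show x^3*x = x^4 from by ring, show x^2*x = x^3 from by ring,
            show x*x = x^2 from by ring] at k5
        rw [hC3, hC2, hC2', hC3', hD3] at k5
        have k6 := hii x x
        rw [show x^2*x = x^3 from by ring, show x*x = x^2 from by ring] at k6
        have k7 := hii x (x^2)
        rw [show x^2*x^2 = x^4 from by ring, show x*x^2 = x^3 from by ring] at k7
        rw [hg2, hg3] at k1 k2 k3
        rw [hg3] at k4
        have key2 : ((n:ℂ) * (((n:ℂ) - 1) * ((2*(n:ℂ) - 1) * (c^(2*n-4) * 2))))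
            * (c * a (x^2) - (a x)^2)^2 = 0 := by
          linear_combination 6*(n:ℂ)*k5
            - ((n:ℂ)*((n:ℂ)-1)*((n:ℂ)-2))*k1
            - (3*(n:ℂ)*((n:ℂ)-1)^2)*k2
            - (3*(n:ℂ)*((n:ℂ)-1)*((n:ℂ)-2))*k3
            - ((n:ℂ)*((n:ℂ)-1)*((n:ℂ)-2)*((n:ℂ)-3))*k4
            + (2*(n:ℂ)*((n:ℂ)-1)^2*(2*(n:ℂ)-1)*c^(2*n-4)*(a x))*k6
            + ((n:ℂ)*((n:ℂ)-1)*(2*(n:ℂ)-1)*(3*(n:ℂ)-5)*c^(2*n-4)*c)*k7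
        have hM2 : ((n:ℂ) * (((n:ℂ) - 1) * ((2*(n:ℂ) - 1) * (c^(2*n-4) * 2)))) ≠ 0 :=
          mul_ne_zero hnn (mul_ne_zero hN1 (mul_ne_zero h2N1
            (mul_ne_zero (pow_ne_zero _ hc0) two_ne_zero)))
        have hsq := (mul_eq_zero.mp key2).resolve_left hM2
        have := pow_eq_zero_iff (n := 2) (by omega) |>.mp hsq
        linear_combination this
      -- multiplicativity
      have hmul : ∀ x y : K, c * a (x*y) = a x * a y := by
        intro x y
        have h1 := hiii (x + y)
        rw [show (x+y)^2 = x^2 + (x*y + (x*y + y^2)) from by ring, ha, ha, ha, ha x y] at h1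
        linear_combination (h1 - hiii x - hiii y) / 2
      have hinv : c⁻¹ * c = 1 := inv_mul_cancel₀ hc0
      refine ⟨c, { toFun := fun u => c⁻¹ * a u
                 , map_one' := by
                     show c⁻¹ * a 1 = 1
                     rw [← hc]
                     exact inv_mul_cancel₀ hc0
                 , map_mul' := fun u v => by
                     show c⁻¹ * a (u*v) = (c⁻¹ * a u) * (c⁻¹ * a v)
                     linear_combination c⁻¹*c⁻¹*(hmul u v) - (c⁻¹ * a (u*v))*hinv
                 , map_zero' := by
                     show c⁻¹ * a 0 = 0
                     rw [ha0, mul_zero]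
                 , map_add' := fun u v => by
                     show c⁻¹ * a (u+v) = c⁻¹ * a u + c⁻¹ * a v
                     rw [ha]; ring }, ?_⟩
      intro x
      constructor
      · show a x = c * (c⁻¹ * a x)
        rw [← mul_assoc, mul_inv_cancel₀ hc0, one_mul]
      · show f x = c^(2*n) * (c⁻¹ * a x)^2
        have h3 := L3 x
        rw [L2 (x^2), hC2, hT2] at h3
        have q : c^(2*n-1) = c^(2*n-2) * c := by rw [← pow_succ]; congr 1; omega
        have q2 : c^(2*n) = c^(2*n-2) * c^2 := by rw [← pow_add]; congr 1; omega
        have hx2 := hiii x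
        rw [q] at h3
        have key3 : (n:ℂ)^2 * Bh x x = (n:ℂ)^2 * ((a x)^2 * c^(2*n-2)) := by
          linear_combination h3 - (n:ℂ)*((n:ℂ)-1)*c^(2*n-2)*hx2
        have hBxx := mul_left_cancel₀ (pow_ne_zero 2 hnn) key3
        rw [hf, ← hBhB, hBxx, q2]
        linear_combination (-(c^(2*n-2))*(a x)^2*(c*c⁻¹ + 1))*(mul_inv_cancel₀ hc0)
  · rintro ⟨α, φ, h⟩ x
    have h1 := (h (x ^ n)).2
    rw [h1, map_pow, (h x).1, mul_pow, ← pow_mul,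
      show n * 2 = 2 * n from by omega]
end

section
/- Let f : F → ℂ be a quadratic function with f(x^n) = a(x)^{2n} for all x ∈ F, where a : F → ℂ is additive and F ⊆ ℂ a field, n ≥ 2. Then f(1) = a(1)^{2n}, and there exist complex constants α_1, α_2 such that f(x) = α_1·a(x^2) + α_2·a(x)^2 for all x ∈ F. -/
/-!
Substitute `1 + t • x` with `t ∈ ℕ` into the hypothesis: `B ((1 + t x)^n, (1 + t x)^n)` and
`(a 1 + t a x)^(2n)` are polynomials in `t` that agree on infinitely many points, hence
coefficientwise. The coefficient of `t` gives `B(1, x) + B(x, 1) = 2 a(1)^(2n-1) a(x)`; the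
coefficient of `t²` gives `n² B(x, x) + C(n,2) (B(1, x²) + B(x², 1)) = C(2n,2) a(1)^(2n-2) a(x)²`,
and the first identity at `x²` eliminates the mixed term.
-/

open Polynomial Finset

theorem coeff_C_add_C_mul_X_pow {S : Type*} [CommSemiring S] (c d : S) (N k : ℕ) :
    ((C c + C d * X) ^ N).coeff k = d ^ k * c ^ (N - k) * N.choose k := by
  rw [add_comm, add_pow, finsetSum_coeff]
  have hterm : ∀ i, (C d * X) ^ i * C c ^ (N - i) * (N.choose i : S[X]) =
      C (d ^ i * c ^ (N - i) * N.choose i) * X ^ i := by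
    intro i
    simp only [mul_pow, ← C_pow, ← C_eq_natCast, C_mul]
    ring
  simp only [hterm, coeff_C_mul_X_pow, sum_ite_eq, mem_range]
  split_ifs with hk
  · rfl
  · rw [Nat.choose_eq_zero_of_lt (by omega), Nat.cast_zero, mul_zero]

theorem sum_range_pow_smul_choose_smul {R : Type*} [CommSemiring R] (x : R) (n t : ℕ) :
    ∑ j ∈ range (n + 1), t ^ j • n.choose j • x ^ j = (1 + t • x) ^ n := by
  rw [add_comm (1 : R), add_pow]
  refine sum_congr rfl fun j _ => ?_
  simp only [one_pow, mul_one, nsmul_eq_mul, Nat.cast_pow]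
  ring

section BilinPoly

variable {R S : Type*} [Semiring R] [CommSemiring S] (B : R →+ R →+ S) (u v : ℕ → R)

noncomputable def bilinPoly (N : ℕ) : S[X] :=
  ∑ p ∈ range N ×ˢ range N, monomial (p.1 + p.2) (B (u p.1) (v p.2))

theorem eval_natCast_bilinPoly (N t : ℕ) :
    (bilinPoly B u v N).eval (t : S) =
      B (∑ j ∈ range N, t ^ j • u j) (∑ k ∈ range N, t ^ k • v k) := by
  simp only [map_sum, map_nsmul, AddMonoidHom.finsetSum_apply, AddMonoidHom.nsmul_apply,
    bilinPoly, eval_finsetSum, eval_monomial, sum_product, smul_sum]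
  rw [sum_comm]
  refine sum_congr rfl fun j _ => sum_congr rfl fun k _ => ?_
  simp only [nsmul_eq_mul, Nat.cast_pow]
  ring

theorem coeff_bilinPoly {m N : ℕ} (hm : m < N) :
    (bilinPoly B u v N).coeff m = ∑ p ∈ antidiagonal m, B (u p.1) (v p.2) := by
  have hfilter : (range N ×ˢ range N).filter (fun p => p.1 + p.2 = m) = antidiagonal m := by
    ext p
    simp only [mem_filter, mem_product, mem_range, HasAntidiagonal.mem_antidiagonal]
    omega
  rw [bilinPoly, finsetSum_coeff, ← hfilter, sum_filter]
  simp only [coeff_monomial]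

end BilinPoly

section PowerIdentity

variable {R S : Type*} [CommSemiring R] [CommRing S] [IsDomain S] [CharZero S]
  (B : R →+ R →+ S) (a : R →+ S) {n : ℕ} (h : ∀ x, B (x ^ n) (x ^ n) = a x ^ (2 * n))
include h

theorem bilinPoly_choose_smul_pow_eq (x : R) :
    bilinPoly B (fun j => n.choose j • x ^ j) (fun j => n.choose j • x ^ j) (n + 1) =
      (C (a 1) + C (a x) * X) ^ (2 * n) := by
  refine eq_of_infinite_eval_eq _ _ <|
    (Set.infinite_range_of_injective Nat.cast_injective).mono ?_
  rintro _ ⟨t, rfl⟩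
  rw [Set.mem_ofPred_eq, eval_natCast_bilinPoly, sum_range_pow_smul_choose_smul, h, map_add,
    map_nsmul]
  simp only [eval_pow, eval_add, eval_C, eval_mul, eval_X, nsmul_eq_mul, mul_comm]

theorem sum_antidiagonal_apply_choose_smul_pow_eq (x : R) {m : ℕ} (hm : m ≤ n) :
    ∑ p ∈ antidiagonal m, B (n.choose p.1 • x ^ p.1) (n.choose p.2 • x ^ p.2) =
      a x ^ m * a 1 ^ (2 * n - m) * (2 * n).choose m := by
  rw [← coeff_bilinPoly B (fun j => n.choose j • x ^ j) (fun j => n.choose j • x ^ j)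
    (Nat.lt_succ_of_le hm), bilinPoly_choose_smul_pow_eq B a h, coeff_C_add_C_mul_X_pow]

theorem apply_one_add_apply_one_eq (hn : n ≠ 0) (x : R) :
    B 1 x + B x 1 = 2 * a 1 ^ (2 * n - 1) * a x := by
  have h1 := sum_antidiagonal_apply_choose_smul_pow_eq B a h x (m := 1) (by omega)
  simp only [Nat.sum_antidiagonal_succ, Finset.Nat.antidiagonal_zero, sum_singleton,
    Nat.choose_zero_right, Nat.choose_one_right, zero_add, pow_zero, pow_one, one_smul,
    map_nsmul, AddMonoidHom.nsmul_apply] at h1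
  refine mul_left_cancel₀ (Nat.cast_ne_zero.mpr hn : (n : S) ≠ 0) ?_
  push_cast [nsmul_eq_mul] at h1
  linear_combination h1

theorem mul_self_mul_apply_self_eq (hn : 2 ≤ n) (x : R) :
    (n * n : S) * B x x = (2 * n).choose 2 * a 1 ^ (2 * n - 2) * a x ^ 2 -
      2 * n.choose 2 * a 1 ^ (2 * n - 1) * a (x ^ 2) := by
  have h2 := sum_antidiagonal_apply_choose_smul_pow_eq B a h x (m := 2) hn
  have h1 := apply_one_add_apply_one_eq B a h (by omega) (x ^ 2)
  simp only [Nat.sum_antidiagonal_succ, Finset.Nat.antidiagonal_zero, sum_singleton,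
    Nat.choose_zero_right, Nat.choose_one_right, zero_add, pow_zero, pow_one, one_smul,
    map_nsmul, AddMonoidHom.nsmul_apply] at h2
  push_cast [nsmul_eq_mul] at h2
  linear_combination h2 - (n.choose 2 : S) * h1

end PowerIdentity

theorem exists_apply_self_eq_of_apply_pow_pow_eq {R S : Type*} [CommSemiring R] [Field S]
    [CharZero S] (B : R →+ R →+ S) (a : R →+ S) {n : ℕ} (hn : 2 ≤ n)
    (h : ∀ x, B (x ^ n) (x ^ n) = a x ^ (2 * n)) :
    ∃ α₁ α₂ : S, ∀ x, B x x = α₁ * a (x ^ 2) + α₂ * a x ^ 2 := by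
  have hn0 : (n : S) ≠ 0 := Nat.cast_ne_zero.mpr (by omega)
  refine ⟨-(2 * n.choose 2 * a 1 ^ (2 * n - 1)) / (n * n),
    (2 * n).choose 2 * a 1 ^ (2 * n - 2) / (n * n),
    fun x => mul_left_cancel₀ (mul_self_ne_zero.mpr hn0) ?_⟩
  rw [mul_self_mul_apply_self_eq B a h hn]
  field_simp
  ring

theorem stmt11_general (K : Subfield ℂ) (n : ℕ) (hn : 2 ≤ n)
    (f a : K → ℂ) (B : K → K → ℂ)
    (hB1 : ∀ x y z : K, B (x + y) z = B x z + B y z)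
    (hB2 : ∀ x y z : K, B x (y + z) = B x y + B x z)
    (hf : ∀ x : K, f x = B x x)
    (ha : ∀ x y : K, a (x + y) = a x + a y)
    (heq : ∀ x : K, f (x ^ n) = a x ^ (2 * n)) :
    f 1 = a 1 ^ (2 * n) ∧
      ∃ α₁ α₂ : ℂ, ∀ x : K, f x = α₁ * a (x ^ 2) + α₂ * a x ^ 2 := by
  refine ⟨by simpa using heq 1, ?_⟩
  let B' : K →+ K →+ ℂ :=
    AddMonoidHom.mk' (fun x => AddMonoidHom.mk' (B x) (hB2 x)) fun x y =>
      AddMonoidHom.ext (hB1 x y)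
  obtain ⟨α₁, α₂, hα⟩ := exists_apply_self_eq_of_apply_pow_pow_eq B' (AddMonoidHom.mk' a ha) hn
    fun x => by simpa [B', hf] using heq x
  exact ⟨α₁, α₂, fun x => by simpa [B', hf] using hα x⟩

theorem stmt11 (K : Subfield ℂ) (n : ℕ) (hn : 2 ≤ n)
    (f a : K → ℂ) (B : K → K → ℂ)
    (hB1 : ∀ x y z : K, B (x + y) z = B x z + B y z)
    (hB2 : ∀ x y z : K, B x (y + z) = B x y + B x z)
    (hBs : ∀ x y : K, B x y = B y x)
    (hf : ∀ x : K, f x = B x x)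
    (ha : ∀ x y : K, a (x + y) = a x + a y)
    (heq : ∀ x : K, f (x ^ n) = a x ^ (2 * n)) :
    f 1 = a 1 ^ (2 * n) ∧
      ∃ α₁ α₂ : ℂ, ∀ x : K, f x = α₁ * a (x ^ 2) + α₂ * a x ^ 2 :=
  stmt11_general K n hn f a B hB1 hB2 hf ha heq
end

section
/- Let G be a commutative group, k, n positive integers with k ≥ 2, and f : F → ℂ (F ⊆ ℂ a field) a generalized monomial of degree n such that x ↦ f(x^k) is a normal polynomial, i.e. there are linearly independent additive functions a_1,...,a_m : F → ℂ and a complex polynomial P in m variables with f(x^k) = P(a_1(x),...,a_m(x)) for all x. Then the polynomial P may be chosen homogeneous of degree k·n: f(x^k) = Σ_{|α| = kn} λ_α · a_1(x)^{α_1} ⋯ a_m(x)^{α_m} for all x ∈ F. -/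
/-- Evaluation of a homogeneous polynomial scales by `t ^ d`. -/
lemma eval_scale {m d : ℕ} {q : MvPolynomial (Fin m) ℂ} (hq : q.IsHomogeneous d)
    (t : ℂ) (y : Fin m → ℂ) :
    MvPolynomial.eval (fun i => t * y i) q = t ^ d * MvPolynomial.eval y q := by
  conv_lhs => rw [q.as_sum]
  conv_rhs => rw [q.as_sum]
  rw [map_sum, map_sum, Finset.mul_sum]
  refine Finset.sum_congr rfl fun v hv => ?_
  rw [MvPolynomial.eval_monomial, MvPolynomial.eval_monomial]
  have hdeg : v.degree = d := by
    rw [Finsupp.degree_eq_weight_one]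
    exact hq (MvPolynomial.mem_support_iff.mp hv)
  rw [Finsupp.prod, Finsupp.prod]
  have : ∏ i ∈ v.support, (t * y i) ^ v i
      = (∏ i ∈ v.support, t ^ v i) * ∏ i ∈ v.support, y i ^ v i := by
    rw [← Finset.prod_mul_distrib]
    exact Finset.prod_congr rfl fun i _ => mul_pow _ _ _
  rw [this, Finset.prod_pow_eq_pow_sum]
  rw [show ∑ i ∈ v.support, v i = d from hdeg]; ring

/-- An additive function sends nsmul to nsmul. -/
lemma additive_nsmul {G : Type*} [AddCommMonoid G] (a : G → ℂ)
    (ha : ∀ x y : G, a (x + y) = a x + a y) (r : ℕ) (x : G) :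
    a (r • x) = (r : ℂ) * a x := by
  have h0 : a 0 = 0 := by
    have := ha 0 0; simp only [add_zero] at this
    exact left_eq_add.mp this
  induction r with
  | zero => simpa using h0
  | succ r ih =>
    rw [succ_nsmul, ha, ih]
    push_cast; ring

theorem stmt12 (K : Subfield ℂ) (k n m : ℕ) (hk : 2 ≤ k) (hn : 0 < n)
    (f : K → ℂ) (A : (Fin n → K) → ℂ) (hA : NAdditive A) (hAs : IsSymm' A)
    (hf : ∀ x : K, f x = A fun _ => x)
    (a : Fin m → K → ℂ) (haadd : ∀ i (x y : K), a i (x + y) = a i x + a i y)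
    (hli : LinearIndependent ℂ a)
    (P : MvPolynomial (Fin m) ℂ)
    (hP : ∀ x : K, f (x ^ k) = MvPolynomial.eval (fun i => a i x) P) :
    ∃ Q : MvPolynomial (Fin m) ℂ, Q.IsHomogeneous (k * n) ∧
      ∀ x : K, f (x ^ k) = MvPolynomial.eval (fun i => a i x) Q := by
  classical
  -- Step 1: A vanishes when a coordinate is 0, and scales under nsmul in one coordinate.
  have hA0 : ∀ (i : Fin n) (x : Fin n → K), A (Function.update x i 0) = 0 := by
    intro i x
    have := hA i x 0 0
    simp only [add_zero] at this
    exact left_eq_add.mp this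
  have hAsm : ∀ (i : Fin n) (x : Fin n → K) (r : ℕ) (u : K),
      A (Function.update x i (r • u)) = (r : ℂ) * A (Function.update x i u) := by
    intro i x r u
    induction r with
    | zero => simpa using hA0 i x
    | succ r ih =>
      rw [succ_nsmul, hA i x (r • u) u, ih]
      push_cast; ring
  -- Step 2: the diagonal of A is rationally homogeneous of degree n (for naturals).
  have hdiag : ∀ (r : ℕ) (y : K), A (fun _ => r • y) = (r : ℂ) ^ n * A (fun _ => y) := by
    intro r y
    -- scale coordinates one at a time
    have key : ∀ t : ℕ, t ≤ n →
        A (fun j : Fin n => if (j : ℕ) < t then r • y else y)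
          = (r : ℂ) ^ t * A (fun _ => y) := by
      intro t ht
      induction t with
      | zero => simp
      | succ t ih =>
        have htn : t < n := ht
        have ih' := ih (le_of_lt htn)
        set F : Fin n → K := fun j : Fin n => if (j : ℕ) < t then r • y else y with hF
        have hupd1 : Function.update F ⟨t, htn⟩ (r • y)
            = fun j : Fin n => if (j : ℕ) < t + 1 then r • y else y := by
          funext j
          rcases eq_or_ne j ⟨t, htn⟩ with rfl | hj
          · simp [Function.update_self]
          · rw [Function.update_of_ne hj]
            have hjt : (j : ℕ) ≠ t := fun h => hj (Fin.ext h)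
            simp only [hF]
            by_cases h : (j : ℕ) < t
            · simp [h, Nat.lt_succ_of_lt h]
            · have : ¬ (j : ℕ) < t + 1 := by omega
              simp [h, this]
        have hupd2 : Function.update F ⟨t, htn⟩ y = F := by
          funext j
          rcases eq_or_ne j ⟨t, htn⟩ with rfl | hj
          · simp [Function.update_self, hF]
          · rw [Function.update_of_ne hj]
        calc A (fun j : Fin n => if (j : ℕ) < t + 1 then r • y else y)
            = A (Function.update F ⟨t, htn⟩ (r • y)) := by rw [hupd1]
          _ = (r : ℂ) * A (Function.update F ⟨t, htn⟩ y) := hAsm _ _ _ _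
          _ = (r : ℂ) * A F := by rw [hupd2]
          _ = (r : ℂ) * ((r : ℂ) ^ t * A (fun _ => y)) := by rw [ih']
          _ = (r : ℂ) ^ (t + 1) * A (fun _ => y) := by ring
    have := key n le_rfl
    have heq : (fun j : Fin n => if (j : ℕ) < n then r • y else y) = fun _ => r • y := by
      funext j; simp [j.isLt]
    rw [heq] at this
    exact this
  have hfhom : ∀ (r : ℕ) (y : K), f (r • y) = (r : ℂ) ^ n * f y := by
    intro r y; rw [hf, hf, hdiag]
  -- Step 3: set up the homogeneous components.
  set D : ℕ := max (P.totalDegree + 1) (k * n + 1) with hD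
  have hPsum : ∑ d ∈ Finset.range D, MvPolynomial.homogeneousComponent d P = P := by
    conv_rhs => rw [← MvPolynomial.sum_homogeneousComponent P]
    refine (Finset.sum_subset ?_ ?_).symm
    · intro d hd
      simp only [Finset.mem_range] at hd ⊢
      omega
    · intro d _ hd
      simp only [Finset.mem_range, not_lt] at hd
      exact MvPolynomial.homogeneousComponent_eq_zero d P (by omega)
  refine ⟨MvPolynomial.homogeneousComponent (k * n) P,
    MvPolynomial.homogeneousComponent_isHomogeneous (k * n) P, fun x => ?_⟩
  -- define c d = eval of degree-d component at (a · x)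
  set c : ℕ → ℂ := fun d =>
    MvPolynomial.eval (fun i => a i x) (MvPolynomial.homogeneousComponent d P) with hc
  -- key identity for each natural r
  have key : ∀ r : ℕ, ∑ d ∈ Finset.range D, (r : ℂ) ^ d * c d
      = (r : ℂ) ^ (k * n) * MvPolynomial.eval (fun i => a i x) P := by
    intro r
    have h1 : f ((r • x) ^ k) = MvPolynomial.eval (fun i => a i (r • x)) P := hP (r • x)
    have h2 : (r • x : K) ^ k = (r ^ k) • (x ^ k) := by
      rw [nsmul_eq_mul, nsmul_eq_mul, mul_pow]
      push_cast; ring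
    have h3 : f ((r • x) ^ k) = (r : ℂ) ^ (k * n) * f (x ^ k) := by
      rw [h2, hfhom]
      push_cast
      rw [← pow_mul]
    have h4 : (fun i => a i (r • x)) = fun i => (r : ℂ) * a i x := by
      funext i; exact additive_nsmul (a i) (haadd i) r x
    have h5 : MvPolynomial.eval (fun i => (r : ℂ) * a i x) P
        = ∑ d ∈ Finset.range D, (r : ℂ) ^ d * c d := by
      conv_lhs => rw [← hPsum]
      rw [map_sum]
      refine Finset.sum_congr rfl fun d _ => ?_
      exact eval_scale (MvPolynomial.homogeneousComponent_isHomogeneous d P) _ _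
    rw [h4, h5] at h1
    rw [← h1, h3, hP]
  -- the polynomial identity in r forces all other components evaluated to vanish
  set p : Polynomial ℂ :=
    (∑ d ∈ Finset.range D, Polynomial.C (c d) * Polynomial.X ^ d)
      - Polynomial.C (MvPolynomial.eval (fun i => a i x) P)
          * Polynomial.X ^ (k * n) with hp
  have hroots : ∀ r : ℕ, p.IsRoot (r : ℂ) := by
    intro r
    simp only [hp, Polynomial.IsRoot, Polynomial.eval_sub, Polynomial.eval_finset_sum,
      Polynomial.eval_mul, Polynomial.eval_C, Polynomial.eval_pow, Polynomial.eval_X]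
    rw [sub_eq_zero]
    have hcomm : ∑ x ∈ Finset.range D, c x * (r : ℂ) ^ x
        = ∑ x ∈ Finset.range D, (r : ℂ) ^ x * c x :=
      Finset.sum_congr rfl fun d _ => mul_comm _ _
    rw [hcomm, key r, mul_comm]
  have hp0 : p = 0 := by
    apply Polynomial.eq_zero_of_infinite_isRoot
    apply Set.Infinite.mono (s := Set.range (Nat.cast : ℕ → ℂ))
    · rintro z ⟨r, rfl⟩
      exact hroots r
    · exact Set.infinite_range_of_injective Nat.cast_injective
  have hcoeff : p.coeff (k * n) = 0 := by rw [hp0]; simp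
  have hkn : k * n < D := lt_of_lt_of_le (Nat.lt_succ_self _) (le_max_right _ _)
  have hcsum : (∑ d ∈ Finset.range D, Polynomial.C (c d) * Polynomial.X ^ d).coeff (k * n)
      = c (k * n) := by
    rw [Polynomial.finset_sum_coeff]
    rw [Finset.sum_eq_single (k * n)]
    · simp
    · intro d _ hd
      simp [Polynomial.coeff_C_mul, Polynomial.coeff_X_pow, Ne.symm hd]
    · intro h; exact absurd (Finset.mem_range.mpr hkn) h
  rw [hp, Polynomial.coeff_sub, hcsum, Polynomial.coeff_C_mul, Polynomial.coeff_X_pow] at hcoeff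
  simp only [if_pos rfl, eq_self_iff_true, if_true, mul_one] at hcoeff
  rw [hP]
  exact (sub_eq_zero.mp hcoeff).symm
end
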